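/- arXiv:2206.02654 — 9 statements merged into one kernel-verified Lean document; each statement's English description precedes it below -/
import Mathlib

section
/- Let 1 < p ≤ 2 and α ∈ (−1−p, −1−p/2]. Suppose that for each N ≥ 2 there exist real coefficients c_{k,N} (2 ≤ k ≤ N) such that, setting S_N(n) = 1 + Σ_{k=2}^N c_{k,N}·r_k(n) for every integer n ≥ 1, the quantity Σ_{n=1}^∞ |S_N(n)|^p (n+1)^α tends to 0 as N → ∞. Then the Riemann zeta function ζ has no zeros in the open half-plane {s ∈ ℂ : Re(s) > −(α+1)/p}. -/
open Finset Filter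

/-- `r k n = k·{n/k} = n mod k`. -/
noncomputable def r (k n : ℕ) : ℝ := (n % k : ℕ)

open Complex


noncomputable def vv (z : ℂ) (n : ℕ) : ℂ := ((n : ℂ) + 1) ^ (-z)

lemma vv_succ (z : ℂ) (n : ℕ) : vv z (n + 1) = ((n : ℂ) + 2) ^ (-z) := by
  unfold vv; push_cast; ring_nf

lemma vv_norm (z : ℂ) (n : ℕ) : ‖vv z n‖ = ((n : ℝ) + 1) ^ (-z.re) := by
  unfold vv
  rw [show ((n : ℂ) + 1) = (((n : ℝ) + 1 : ℝ) : ℂ) by push_cast; ring]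
  rw [Complex.norm_cpow_eq_rpow_re_of_pos (by positivity)]
  simp

lemma hasDerivAt_aux (z : ℂ) (x : ℝ) (hx : 0 < x) :
    HasDerivAt (fun t : ℝ => ((t : ℂ)) ^ (-z)) (-z * (x : ℂ) ^ (-z - 1)) x := by
  have h0 : (x : ℂ) ∈ Complex.slitPlane := by
    exact Or.inl (by simpa using hx)
  have h1 : HasDerivAt (fun w : ℂ => w ^ (-z)) (-z * (x : ℂ) ^ (-z - 1)) (x : ℂ) := by
    simpa [mul_comm] using (Complex.hasStrictDerivAt_cpow_const (c := -z) h0).hasDerivAt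
  exact h1.comp_ofReal

-- ‖(n+1)^{-z} - (n+2)^{-z}‖ ≤ ‖z‖ (n+1)^{-re z - 1}
lemma dd_norm_le (z : ℂ) (hz : 0 < z.re) (n : ℕ) :
    ‖vv z n - vv z (n + 1)‖ ≤ ‖z‖ * ((n : ℝ) + 1) ^ (-z.re - 1) := by
  have key : ∀ x ∈ Set.Icc ((n : ℝ) + 1) ((n : ℝ) + 2),
      HasDerivWithinAt (fun t : ℝ => ((t : ℂ)) ^ (-z)) (-z * (x : ℂ) ^ (-z - 1))
        (Set.Icc ((n : ℝ) + 1) ((n : ℝ) + 2)) x := by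
    intro x hx
    have hx1 : (0:ℝ) < (n : ℝ) + 1 := by positivity
    exact (hasDerivAt_aux z x (lt_of_lt_of_le hx1 hx.1)).hasDerivWithinAt
  have bound : ∀ x ∈ Set.Icc ((n : ℝ) + 1) ((n : ℝ) + 2),
      ‖-z * (x : ℂ) ^ (-z - 1)‖ ≤ ‖z‖ * ((n : ℝ) + 1) ^ (-z.re - 1) := by
    intro x hx
    have hx1 : (0 : ℝ) < (n : ℝ) + 1 := by positivity
    have hx0 : (0 : ℝ) < x := lt_of_lt_of_le hx1 hx.1
    rw [norm_mul, norm_neg]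
    gcongr
    rw [Complex.norm_cpow_eq_rpow_re_of_pos hx0]
    have : (-z - 1).re = -z.re - 1 := by simp
    rw [this]
    exact Real.rpow_le_rpow_of_nonpos hx1 hx.1 (by linarith)
  have := Convex.norm_image_sub_le_of_norm_hasDerivWithin_le key bound (convex_Icc _ _)
    (Set.left_mem_Icc.2 (by linarith)) (Set.right_mem_Icc.2 (by linarith))
  have h2 : ‖((n : ℝ) + 2) - ((n : ℝ) + 1)‖ = 1 := by norm_num
  rw [h2, mul_one] at this
  have e1 : (((((n : ℝ) + 2) : ℝ)) : ℂ) ^ (-z) = vv z (n + 1) := by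
    rw [vv_succ]; push_cast; ring_nf
  have e2 : (((((n : ℝ) + 1) : ℝ)) : ℂ) ^ (-z) = vv z n := by
    unfold vv; push_cast; ring_nf
  rw [e1, e2] at this
  simpa [norm_sub_rev] using this

lemma summable_shift_rpow {e : ℝ} (he : e < -1) : Summable (fun n : ℕ => ((n : ℝ) + 1) ^ e) := by
  have := (Real.summable_nat_rpow (p := e)).2 he
  have h2 := (summable_nat_add_iff (f := fun n : ℕ => (n : ℝ) ^ e) 1).2 this
  refine h2.congr fun n => by push_cast; ring_nf

lemma summable_dd (z : ℂ) (hz : 0 < z.re) : Summable (fun n => vv z n - vv z (n + 1)) := by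
  apply Summable.of_norm
  apply Summable.of_nonneg_of_le (fun n => norm_nonneg _) (fun n => dd_norm_le z hz n)
  exact (summable_shift_rpow (by linarith)).mul_left _

lemma tendsto_vv (z : ℂ) (hz : 0 < z.re) : Tendsto (fun n : ℕ => vv z n) atTop (nhds 0) := by
  rw [tendsto_zero_iff_norm_tendsto_zero]
  simp only [vv_norm]
  have h1 : Tendsto (fun n : ℕ => ((n : ℝ) + 1)) atTop atTop :=
    tendsto_atTop_add_const_right _ _ tendsto_natCast_atTop_atTop
  have h2 : Tendsto (fun x : ℝ => x ^ (-z.re)) atTop (nhds 0) := by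
    simpa using tendsto_rpow_neg_atTop hz
  exact h2.comp h1

lemma hasSum_dd (z : ℂ) (hz : 0 < z.re) : HasSum (fun n => vv z n - vv z (n + 1)) 1 := by
  have hs : Summable fun n => ‖vv z n - vv z (n + 1)‖ :=
    Summable.of_nonneg_of_le (fun n => norm_nonneg _) (fun n => dd_norm_le z hz n)
      ((summable_shift_rpow (by linarith)).mul_left _)
  rw [hasSum_iff_tendsto_nat_of_summable_norm hs]
  have key : ∀ M : ℕ, ∑ n ∈ Finset.range M, (vv z n - vv z (n + 1)) = vv z 0 - vv z M :=
    fun M => Finset.sum_range_sub' (fun n => vv z n) M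
  simp only [key]
  have h0 : vv z 0 = 1 := by simp [vv]
  rw [h0]
  simpa using tendsto_const_nhds.sub (tendsto_vv z hz)


noncomputable def aa (k n : ℕ) : ℝ := if k ∣ (n + 1) then 1 - (k : ℝ) else 1

lemma r_zero (k : ℕ) : r k 0 = 0 := by simp [r]

lemma r_nonneg (k n : ℕ) : 0 ≤ r k n := Nat.cast_nonneg _

lemma r_le (k n : ℕ) (hk : 1 ≤ k) : r k n ≤ k := by
  unfold r
  exact_mod_cast (Nat.mod_lt n hk).le

lemma r_succ (k n : ℕ) (hk : 1 ≤ k) : r k (n + 1) = r k n + aa k n := by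
  unfold r aa
  by_cases hd : k ∣ (n + 1)
  · simp only [hd, if_true]
    obtain ⟨m, hm⟩ := hd
    have hm0 : m ≠ 0 := by rintro rfl; simp at hm
    obtain ⟨m', rfl⟩ : ∃ m', m = m' + 1 := ⟨m - 1, by omega⟩
    have hm' : n + 1 = k * m' + k := by rw [hm]; ring
    have h1 : (n + 1) % k = 0 := by
      rw [hm]; exact Nat.mul_mod_right k (m' + 1)
    have h2 : n % k = k - 1 := by
      have hn : n = k * m' + (k - 1) := by omega
      rw [hn, Nat.mul_add_mod]
      exact Nat.mod_eq_of_lt (by omega)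
    rw [h1, h2]
    push_cast [Nat.cast_sub hk]
    ring
  · simp only [hd, if_false]
    have hk2 : 2 ≤ k := by
      by_contra hlt
      have : k = 1 := by omega
      subst this; exact hd (one_dvd _)
    have h2 : n % k < k := Nat.mod_lt n (by omega)
    have h3 : (n + 1) % k = (n % k + 1) % k := by
      conv_lhs => rw [Nat.add_mod, Nat.mod_eq_of_lt (by omega : 1 < k)]
    rcases Nat.lt_or_ge (n % k + 1) k with h | h
    · rw [h3, Nat.mod_eq_of_lt h]
      push_cast; ring
    · exfalso
      apply hd
      apply Nat.dvd_of_mod_eq_zero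
      rw [h3, show n % k + 1 = k by omega, Nat.mod_self]

-- Abel summation (finite)
lemma abel_identity (R : ℕ → ℝ) (hR0 : R 0 = 0) (v : ℕ → ℂ) (M : ℕ) :
    ∑ n ∈ Finset.range M, (R (n + 1) : ℂ) * (v n - v (n + 1)) =
      ∑ n ∈ Finset.range M, ((R (n + 1) - R n : ℝ) : ℂ) * v n - (R M : ℂ) * v M := by
  induction M with
  | zero => simp [hR0]
  | succ M ih =>
    rw [Finset.sum_range_succ, Finset.sum_range_succ, ih]
    push_cast
    ring

lemma summable_rdd (k : ℕ) (hk1 : 1 ≤ k) (z : ℂ) (hz : 0 < z.re) :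
    Summable (fun n : ℕ => ‖(r k (n + 1) : ℂ) * (vv z n - vv z (n + 1))‖) := by
  apply Summable.of_nonneg_of_le (fun n => norm_nonneg _)
    (fun n => ?_) (((summable_shift_rpow (by linarith : -z.re - 1 < -1)).mul_left (k * ‖z‖)))
  rw [norm_mul]
  have h1 : ‖((r k (n + 1) : ℝ) : ℂ)‖ ≤ (k : ℝ) := by
    rw [Complex.norm_real, Real.norm_eq_abs, _root_.abs_of_nonneg (r_nonneg _ _)]
    exact r_le _ _ hk1
  calc ‖((r k (n + 1) : ℝ) : ℂ)‖ * ‖vv z n - vv z (n + 1)‖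
      ≤ (k : ℝ) * (‖z‖ * ((n : ℝ) + 1) ^ (-z.re - 1)) := by
        apply mul_le_mul h1 (dd_norm_le z hz n) (norm_nonneg _) (Nat.cast_nonneg _)
    _ = k * ‖z‖ * ((n : ℝ) + 1) ^ (-z.re - 1) := by ring

lemma summable_vv (z : ℂ) (hz : 1 < z.re) : Summable (fun n => vv z n) := by
  apply Summable.of_norm
  simp only [vv_norm]
  exact summable_shift_rpow (by linarith)

lemma tsum_vv (z : ℂ) (hz : 1 < z.re) : ∑' n, vv z n = riemannZeta z := by
  rw [zeta_eq_tsum_one_div_nat_add_one_cpow hz]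
  apply tsum_congr
  intro n
  rw [vv]
  rw [cpow_neg, one_div]

lemma tsum_ind (k : ℕ) (hk : 2 ≤ k) (z : ℂ) (hz : 1 < z.re) :
    ∑' n : ℕ, (if k ∣ (n + 1) then vv z n else 0) = (k : ℂ) ^ (-z) * riemannZeta z := by
  have hg : Function.Injective (fun j : ℕ => k * j + (k - 1)) := by
    intro a b hab
    simp only at hab
    have h2 : k * a = k * b := by omega
    exact Nat.eq_of_mul_eq_mul_left (by omega) h2
  have hsupp : Function.support (fun n : ℕ => if k ∣ (n + 1) then vv z n else 0) ⊆
      Set.range (fun j : ℕ => k * j + (k - 1)) := by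
    intro n hn
    simp only [Function.mem_support] at hn
    by_cases hd : k ∣ (n + 1)
    · obtain ⟨m, hm⟩ := hd
      have hm0 : m ≠ 0 := by rintro rfl; simp at hm
      obtain ⟨m', rfl⟩ : ∃ m', m = m' + 1 := ⟨m - 1, by omega⟩
      refine ⟨m', ?_⟩
      simp only
      have hx : k * (m' + 1) = k * m' + k := by ring
      omega
    · exact absurd (if_neg hd) hn
  rw [← hg.tsum_eq hsupp]
  have key : ∀ j : ℕ, (if k ∣ ((k * j + (k - 1)) + 1) then vv z (k * j + (k - 1)) else 0) =
      (k : ℂ) ^ (-z) * vv z j := by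
    intro j
    have hx : k * (j + 1) = k * j + k := by ring
    have h1 : (k * j + (k - 1)) + 1 = k * (j + 1) := by omega
    have hdvd : k ∣ ((k * j + (k - 1)) + 1) := h1 ▸ Dvd.intro (j + 1) rfl
    rw [if_pos hdvd]
    unfold vv
    have h2 : ((k * j + (k - 1) : ℕ) : ℂ) + 1 = ((k * (j + 1) : ℕ) : ℂ) := by
      exact_mod_cast congrArg (fun t : ℕ => (t : ℂ)) h1
    rw [h2]
    rw [show ((k * (j + 1) : ℕ) : ℂ) = (((k : ℝ) * ((j : ℝ) + 1) : ℝ) : ℂ) by push_cast; ring]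
    rw [Complex.ofReal_mul, mul_cpow_ofReal_nonneg (Nat.cast_nonneg _) (by positivity)]
    push_cast
    ring
  rw [tsum_congr key, tsum_mul_left, tsum_vv z hz]

lemma aa_norm_le (k : ℕ) (hk : 1 ≤ k) (n : ℕ) : ‖((aa k n : ℝ) : ℂ)‖ ≤ (k : ℝ) := by
  rw [Complex.norm_real, Real.norm_eq_abs]
  unfold aa
  by_cases hd : k ∣ (n + 1)
  · simp only [hd, if_true]
    have h1 : (1 : ℝ) ≤ (k : ℝ) := by exact_mod_cast hk
    have h2 : |1 - (k : ℝ)| = (k : ℝ) - 1 := by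
      rw [abs_sub_comm, _root_.abs_of_nonneg (by linarith)]
    rw [h2]; linarith
  · simp only [hd, if_false]
    rw [abs_one]
    exact_mod_cast hk

lemma summable_aav (k : ℕ) (hk : 1 ≤ k) (z : ℂ) (hz : 1 < z.re) :
    Summable (fun n => ((aa k n : ℝ) : ℂ) * vv z n) := by
  apply Summable.of_norm
  apply Summable.of_nonneg_of_le (fun n => norm_nonneg _) (fun n => ?_)
    ((summable_shift_rpow (by linarith : -z.re < -1)).mul_left (k : ℝ))
  rw [norm_mul, vv_norm]
  exact mul_le_mul_of_nonneg_right (aa_norm_le k hk n) (Real.rpow_nonneg (by positivity) _)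

lemma tsum_aav (k : ℕ) (hk : 2 ≤ k) (z : ℂ) (hz : 1 < z.re) :
    ∑' n, ((aa k n : ℝ) : ℂ) * vv z n = (1 - (k : ℂ) ^ ((1 : ℂ) - z)) * riemannZeta z := by
  have hsplit : ∀ n : ℕ, ((aa k n : ℝ) : ℂ) * vv z n =
      vv z n - (k : ℂ) * (if k ∣ (n + 1) then vv z n else 0) := by
    intro n
    unfold aa
    by_cases hd : k ∣ (n + 1)
    · simp only [hd, if_true]; push_cast; ring
    · simp only [hd, if_false]; push_cast; ring
  rw [tsum_congr hsplit]
  have h1 : Summable (fun n => vv z n) := summable_vv z hz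
  have h2 : Summable (fun n : ℕ => (if k ∣ (n + 1) then vv z n else 0)) := by
    apply Summable.of_norm_bounded (summable_norm_iff.2 h1)
    intro n
    by_cases hd : k ∣ (n + 1) <;> simp [hd, norm_nonneg]
  rw [Summable.tsum_sub h1 (h2.mul_left _), tsum_mul_left, tsum_ind k hk z hz, tsum_vv z hz]
  have hk0 : (k : ℂ) ≠ 0 := by
    simp only [ne_eq, Nat.cast_eq_zero]; omega
  rw [show (1 : ℂ) - z = 1 + (-z) by ring, Complex.cpow_add _ _ hk0, Complex.cpow_one]
  ring

lemma Fk_eq (k : ℕ) (hk : 2 ≤ k) (z : ℂ) (hz : 1 < z.re) :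
    ∑' n, (r k (n + 1) : ℂ) * (vv z n - vv z (n + 1)) =
      (1 - (k : ℂ) ^ ((1 : ℂ) - z)) * riemannZeta z := by
  have hk1 : 1 ≤ k := by omega
  have hz0 : 0 < z.re := by linarith
  have hsum : Summable (fun n => (r k (n + 1) : ℂ) * (vv z n - vv z (n + 1))) :=
    Summable.of_norm (summable_rdd k hk1 z hz0)
  have habel : ∀ M : ℕ, ∑ n ∈ Finset.range M, (r k (n + 1) : ℂ) * (vv z n - vv z (n + 1)) =
      ∑ n ∈ Finset.range M, ((aa k n : ℝ) : ℂ) * vv z n - (r k M : ℂ) * vv z M := by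
    intro M
    rw [abel_identity (fun n => r k n) (r_zero k) (vv z) M]
    congr 1
    apply Finset.sum_congr rfl
    intro n _
    congr 2
    rw [r_succ k n hk1]
    ring
  have hA := (summable_aav k hk1 z hz).hasSum.tendsto_sum_nat
  have hbd : Tendsto (fun M : ℕ => (r k M : ℂ) * vv z M) atTop (nhds 0) := by
    rw [tendsto_zero_iff_norm_tendsto_zero]
    have hbound : ∀ M : ℕ, ‖(r k M : ℂ) * vv z M‖ ≤ (k : ℝ) * (((M : ℝ) + 1) ^ (-z.re)) := by
      intro M
      rw [norm_mul, vv_norm]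
      apply mul_le_mul_of_nonneg_right _ (Real.rpow_nonneg (by positivity) _)
      rw [Complex.norm_real, Real.norm_eq_abs, _root_.abs_of_nonneg (r_nonneg _ _)]
      exact r_le _ _ hk1
    have htend : Tendsto (fun M : ℕ => (k : ℝ) * (((M : ℝ) + 1) ^ (-z.re))) atTop (nhds 0) := by
      rw [show (0 : ℝ) = (k : ℝ) * 0 by ring]
      apply Tendsto.const_mul
      have h1 : Tendsto (fun n : ℕ => ((n : ℝ) + 1)) atTop atTop :=
        tendsto_atTop_add_const_right _ _ tendsto_natCast_atTop_atTop
      have h2 : Tendsto (fun x : ℝ => x ^ (-z.re)) atTop (nhds 0) := by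
        simpa using tendsto_rpow_neg_atTop hz0
      exact h2.comp h1
    exact squeeze_zero (fun n => norm_nonneg _) hbound htend
  have hlim1 : Tendsto (fun M : ℕ => ∑ n ∈ Finset.range M,
      (r k (n + 1) : ℂ) * (vv z n - vv z (n + 1))) atTop
      (nhds (∑' n, ((aa k n : ℝ) : ℂ) * vv z n)) := by
    simp only [habel]
    simpa using hA.sub hbd
  have hlim2 := hsum.hasSum.tendsto_sum_nat
  rw [← tsum_aav k hk z hz]
  exact tendsto_nhds_unique hlim2 hlim1

lemma F_differentiableAt (k : ℕ) (hk1 : 1 ≤ k) (z₀ : ℂ) (h0 : 0 < z₀.re) :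
    DifferentiableAt ℂ (fun z => ∑' n, (r k (n + 1) : ℂ) * (vv z n - vv z (n + 1))) z₀ := by
  set δ : ℝ := z₀.re / 2 with hδdef
  have hδ : 0 < δ := by positivity
  set B : Set ℂ := Metric.ball z₀ δ with hBdef
  have hre : ∀ z ∈ B, δ ≤ z.re := by
    intro z hz
    rw [Metric.mem_ball, Complex.dist_eq] at hz
    have h1 : |z.re - z₀.re| ≤ ‖z - z₀‖ := by
      simpa [Complex.sub_re] using Complex.abs_re_le_norm (z - z₀)
    have := abs_le.1 h1
    simp only [hδdef]
    linarith [this.1, hz.le]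
  have hnorm : ∀ z ∈ B, ‖z‖ ≤ ‖z₀‖ + δ := by
    intro z hz
    rw [Metric.mem_ball] at hz
    calc ‖z‖ = ‖z₀ + (z - z₀)‖ := by ring_nf
      _ ≤ ‖z₀‖ + ‖z - z₀‖ := norm_add_le _ _
      _ ≤ ‖z₀‖ + δ := by
          have : ‖z - z₀‖ = dist z z₀ := by rw [dist_eq_norm]
          linarith [this ▸ hz.le]
  have hu : Summable (fun n : ℕ => (k : ℝ) * ((‖z₀‖ + δ) * ((n : ℝ) + 1) ^ (-δ - 1))) :=
    ((summable_shift_rpow (by linarith : -δ - 1 < -1)).mul_left _).mul_left _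
  have hdiff : DifferentiableOn ℂ
      (fun z => ∑' n, (r k (n + 1) : ℂ) * (vv z n - vv z (n + 1))) B := by
    apply differentiableOn_tsum_of_summable_norm hu
    · intro n
      apply DifferentiableOn.const_mul
      have h1 : ((n : ℂ) + 1) ≠ 0 := by
        intro hcon
        have := congrArg Complex.re hcon
        simp [Complex.add_re] at this
        linarith [Nat.cast_nonneg (α := ℝ) n]
      have h2 : ((n : ℂ) + 2) ≠ 0 := by
        intro hcon
        have := congrArg Complex.re hcon
        simp [Complex.add_re] at this
        linarith [Nat.cast_nonneg (α := ℝ) n]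
      have d1 : DifferentiableOn ℂ (fun z : ℂ => vv z n) B := by
        apply DifferentiableOn.mono _ (Set.subset_univ B)
        intro z _
        apply DifferentiableAt.differentiableWithinAt
        exact (differentiable_neg.differentiableAt).const_cpow (Or.inl h1)
      have d2 : DifferentiableOn ℂ (fun z : ℂ => vv z (n + 1)) B := by
        intro z _
        apply DifferentiableAt.differentiableWithinAt
        simp only [vv_succ]
        exact (differentiable_neg.differentiableAt).const_cpow (Or.inl h2)
      exact d1.sub d2
    · exact Metric.isOpen_ball
    · intro n z hz
      rw [norm_mul]
      have hzre : 0 < z.re := lt_of_lt_of_le hδ (hre z hz)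
      calc ‖((r k (n + 1) : ℝ) : ℂ)‖ * ‖vv z n - vv z (n + 1)‖
          ≤ (k : ℝ) * (‖z‖ * ((n : ℝ) + 1) ^ (-z.re - 1)) := by
            apply mul_le_mul _ (dd_norm_le z hzre n) (norm_nonneg _) (Nat.cast_nonneg _)
            rw [Complex.norm_real, Real.norm_eq_abs, _root_.abs_of_nonneg (r_nonneg _ _)]
            exact r_le _ _ hk1
        _ ≤ (k : ℝ) * ((‖z₀‖ + δ) * ((n : ℝ) + 1) ^ (-δ - 1)) := by
            apply mul_le_mul_of_nonneg_left _ (Nat.cast_nonneg _)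
            apply mul_le_mul (hnorm z hz) _ (Real.rpow_nonneg (by positivity) _)
              (by positivity)
            apply Real.rpow_le_rpow_of_exponent_le (by linarith [Nat.cast_nonneg (α := ℝ) n])
            linarith [hre z hz]
  exact hdiff.differentiableAt (Metric.isOpen_ball.mem_nhds (Metric.mem_ball_self hδ))

noncomputable def EE : ℂ → ℂ := fun z =>
  if z = 1 then (Real.eulerMascheroniConstant : ℂ) else riemannZeta z - 1 / (z - 1)

lemma EE_differentiableOn : DifferentiableOn ℂ EE {z : ℂ | 1 / 2 < z.re} := by
  have hU : IsOpen {z : ℂ | 1 / 2 < z.re} := isOpen_lt continuous_const Complex.continuous_re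
  have h1U : (1 : ℂ) ∈ {z : ℂ | 1 / 2 < z.re} := by norm_num [Set.mem_setOf_eq]
  rw [← Complex.differentiableOn_compl_singleton_and_continuousAt_iff
    (hU.mem_nhds h1U) (c := 1)]
  constructor
  · intro z hz
    obtain ⟨hzU, hz1⟩ := hz
    simp only [Set.mem_singleton_iff] at hz1
    apply DifferentiableAt.differentiableWithinAt
    have hev : EE =ᶠ[nhds z] (fun w => riemannZeta w - 1 / (w - 1)) := by
      filter_upwards [isOpen_compl_singleton.mem_nhds (by simpa using hz1 :
        z ∈ ({1} : Set ℂ)ᶜ)] with w hw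
      simp only [Set.mem_compl_iff, Set.mem_singleton_iff] at hw
      simp [EE, hw]
    have hd : DifferentiableAt ℂ (fun w => riemannZeta w - 1 / (w - 1)) z :=
      (differentiableAt_riemannZeta hz1).sub
        ((differentiableAt_const _).div (differentiableAt_id.sub_const 1) (sub_ne_zero.2 hz1))
    exact hd.congr_of_eventuallyEq hev
  · have hEE1 : EE 1 = (Real.eulerMascheroniConstant : ℂ) := by simp [EE]
    have htend : Tendsto EE (nhdsWithin 1 {(1 : ℂ)}ᶜ) (nhds (EE 1)) := by
      rw [hEE1]
      apply Tendsto.congr' _ tendsto_riemannZeta_sub_one_div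
      filter_upwards [self_mem_nhdsWithin] with w hw
      simp only [Set.mem_compl_iff, Set.mem_singleton_iff] at hw
      simp [EE, hw]
    rw [ContinuousAt, ← nhdsNE_sup_pure (1 : ℂ), Filter.tendsto_sup]
    exact ⟨htend, tendsto_pure_nhds _ _⟩

lemma Fk_tsum_zero (k : ℕ) (hk : 2 ≤ k) {s : ℂ} (hs : 1 / 2 < s.re) (hs1 : s ≠ 1)
    (hζ : riemannZeta s = 0) :
    ∑' n, (r k (n + 1) : ℂ) * (vv s n - vv s (n + 1)) = 0 := by
  have hk1 : 1 ≤ k := by omega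
  have hk0 : (k : ℂ) ≠ 0 := by
    simp only [ne_eq, Nat.cast_eq_zero]; omega
  set U : Set ℂ := {z : ℂ | 1 / 2 < z.re} with hUdef
  have hUopen : IsOpen U := isOpen_lt continuous_const Complex.continuous_re
  set F : ℂ → ℂ := fun z => ∑' n, (r k (n + 1) : ℂ) * (vv z n - vv z (n + 1)) with hFdef
  set A : ℂ → ℂ := fun z => (z - 1) * F z with hAdef
  set Bf : ℂ → ℂ := fun z => (1 - (k : ℂ) ^ ((1 : ℂ) - z)) * ((z - 1) * EE z + 1) with hBdef
  have hAdiff : DifferentiableOn ℂ A U := by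
    intro z hz
    have hz2 : (0 : ℝ) < z.re := by
      have : 1 / 2 < z.re := hz
      linarith
    exact ((differentiableAt_id.sub_const 1).mul
      (F_differentiableAt k hk1 z hz2)).differentiableWithinAt
  have hBdiff : DifferentiableOn ℂ Bf U := by
    apply DifferentiableOn.mul
    · intro z hz
      apply DifferentiableAt.differentiableWithinAt
      apply (differentiableAt_const _).sub
      exact ((differentiable_const (1 : ℂ)).sub differentiable_id).differentiableAt.const_cpow
        (Or.inl hk0)
    · exact (((differentiableOn_id.sub_const 1).mul EE_differentiableOn).add_const 1)
  have hpre : IsPreconnected U := (convex_halfSpace_re_gt (1 / 2)).isPreconnected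
  have h2U : (2 : ℂ) ∈ U := by
    simp only [hUdef, Set.mem_setOf_eq]
    norm_num
  have heq : A =ᶠ[nhds 2] Bf := by
    have hopen1 : IsOpen {z : ℂ | 1 < z.re} := isOpen_lt continuous_const Complex.continuous_re
    have h2mem : (2 : ℂ) ∈ {z : ℂ | 1 < z.re} := by norm_num [Set.mem_setOf_eq]
    filter_upwards [hopen1.mem_nhds h2mem] with z hz
    have hz1 : 1 < z.re := hz
    have hzne : z ≠ 1 := by
      intro hcon
      rw [hcon] at hz1
      simp at hz1
    have hzsub : z - 1 ≠ 0 := sub_ne_zero.2 hzne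
    simp only [hAdef, hBdef]
    rw [hFdef]
    simp only
    rw [Fk_eq k hk z hz1]
    have hEE : EE z = riemannZeta z - 1 / (z - 1) := by simp [EE, hzne]
    rw [hEE]
    field_simp
    ring
  have hEqOn := AnalyticOnNhd.eqOn_of_preconnected_of_eventuallyEq
    ((analyticOnNhd_iff_differentiableOn hUopen).2 hAdiff)
    ((analyticOnNhd_iff_differentiableOn hUopen).2 hBdiff) hpre h2U heq
  have hsU : s ∈ U := hs
  have hval := hEqOn hsU
  simp only [hAdef, hBdef] at hval
  have hEEs : EE s = riemannZeta s - 1 / (s - 1) := by simp [EE, hs1]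
  rw [hEEs, hζ] at hval
  have hssub : s - 1 ≠ 0 := sub_ne_zero.2 hs1
  have hzero : (s - 1) * (0 - 1 / (s - 1)) + 1 = 0 := by
    field_simp
    ring
  rw [hzero, mul_zero] at hval
  have := mul_eq_zero.1 hval
  rcases this with h | h
  · exact absurd h hssub
  · exact h

lemma Fk_hasSum_zero (k : ℕ) (hk : 2 ≤ k) {s : ℂ} (hs : 1 / 2 < s.re) (hs1 : s ≠ 1)
    (hζ : riemannZeta s = 0) :
    HasSum (fun n => (r k (n + 1) : ℂ) * (vv s n - vv s (n + 1))) 0 := by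
  have hsum : Summable (fun n => (r k (n + 1) : ℂ) * (vv s n - vv s (n + 1))) :=
    Summable.of_norm (summable_rdd k (by omega) s (by linarith))
  have := hsum.hasSum
  rwa [Fk_tsum_zero k hk hs hs1 hζ] at this

theorem zero_free_region_of_approximation
    (p α : ℝ) (hp1 : 1 < p) (hp2 : p ≤ 2)
    (hα1 : -1 - p < α) (hα2 : α ≤ -1 - p / 2)
    (c : ℕ → ℕ → ℝ)
    (h : Tendsto
      (fun N : ℕ =>
        ∑' n : ℕ,
          |1 + ∑ k ∈ Finset.Icc 2 N, c N k * r k (n + 1)| ^ p * ((n : ℝ) + 2) ^ α)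
      atTop (nhds 0)) :
    ∀ s : ℂ, s ≠ 1 → s.re > -(α + 1) / p → riemannZeta s ≠ 0 := by
  intro s hs1 hsre hζ
  have hp0 : 0 < p := by linarith
  have hpq : p.HolderConjugate (Real.conjExponent p) := Real.HolderConjugate.conjExponent hp1
  set q : ℝ := Real.conjExponent p with hqdef
  have hq1 : 1 < q := hpq.symm.lt
  have hq0 : 0 < q := by linarith
  have hα : α < -1 := by nlinarith
  have hσhalf : 1 / 2 < s.re := by
    have h1 : 1 / 2 ≤ -(α + 1) / p := by
      rw [le_div_iff₀ hp0]
      nlinarith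
    linarith
  have hσ0 : 0 < s.re := by linarith
  -- notation
  set w : ℕ → ℝ := fun n => ((n : ℝ) + 2) ^ α with hwdef
  have hw_pos : ∀ n, 0 < w n := fun n => Real.rpow_pos_of_pos (by positivity) _
  set S : ℕ → ℕ → ℝ := fun N m => 1 + ∑ k ∈ Finset.Icc 2 N, c N k * r k m with hSdef
  set T : ℕ → ℝ := fun N => ∑' n, |S N (n + 1)| ^ p * w n with hTdef
  have hT : Tendsto T atTop (nhds 0) := h
  -- the key HasSum
  have hmain : ∀ N, HasSum (fun n => ((S N (n + 1) : ℝ) : ℂ) * (vv s n - vv s (n + 1))) 1 := by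
    intro N
    have h1 : HasSum (fun n => (vv s n - vv s (n + 1))) 1 := hasSum_dd s hσ0
    have h2 : ∀ k ∈ Finset.Icc 2 N, HasSum
        (fun n => ((c N k : ℝ) : ℂ) * ((r k (n + 1) : ℂ) * (vv s n - vv s (n + 1)))) 0 := by
      intro k hk
      have hk2 : 2 ≤ k := (Finset.mem_Icc.1 hk).1
      simpa using (Fk_hasSum_zero k hk2 hσhalf hs1 hζ).mul_left ((c N k : ℝ) : ℂ)
    have h3 : HasSum (fun n => ∑ k ∈ Finset.Icc 2 N,
        ((c N k : ℝ) : ℂ) * ((r k (n + 1) : ℂ) * (vv s n - vv s (n + 1)))) 0 := by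
      have := hasSum_sum h2
      simpa using this
    have h4 := h1.add h3
    rw [add_zero] at h4
    have hfun : (fun n => ((S N (n + 1) : ℝ) : ℂ) * (vv s n - vv s (n + 1))) =
        (fun n => (vv s n - vv s (n + 1)) + ∑ k ∈ Finset.Icc 2 N,
          ((c N k : ℝ) : ℂ) * ((r k (n + 1) : ℂ) * (vv s n - vv s (n + 1)))) := by
      funext n
      simp only [hSdef]
      push_cast
      rw [add_mul, one_mul, Finset.sum_mul]
      congr 1
      apply Finset.sum_congr rfl
      intro k _
      ring
    rw [hfun]
    exact h4
  -- summability of the weight series per N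
  have hwsummable : Summable w := by
    apply Summable.of_nonneg_of_le (fun n => (hw_pos n).le) (fun n => ?_)
      (summable_shift_rpow hα)
    simp only [hwdef]
    exact Real.rpow_le_rpow_of_nonpos (by positivity) (by linarith) (by linarith)
  have hTsummable : ∀ N, Summable (fun n => |S N (n + 1)| ^ p * w n) := by
    intro N
    set C : ℝ := 1 + ∑ k ∈ Finset.Icc 2 N, |c N k| * k with hCdef
    have hC0 : 0 ≤ C := by
      have : ∀ k ∈ Finset.Icc 2 N, (0 : ℝ) ≤ |c N k| * k := fun k _ => by positivity
      have := Finset.sum_nonneg this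
      simp only [hCdef]
      linarith
    have hSb : ∀ n, |S N (n + 1)| ≤ C := by
      intro n
      simp only [hSdef, hCdef]
      calc |1 + ∑ k ∈ Finset.Icc 2 N, c N k * r k (n + 1)|
          ≤ |(1 : ℝ)| + |∑ k ∈ Finset.Icc 2 N, c N k * r k (n + 1)| := abs_add_le _ _
        _ ≤ 1 + ∑ k ∈ Finset.Icc 2 N, |c N k| * k := by
            rw [abs_one]
            gcongr
            calc |∑ k ∈ Finset.Icc 2 N, c N k * r k (n + 1)|
                ≤ ∑ k ∈ Finset.Icc 2 N, |c N k * r k (n + 1)| :=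
                  Finset.abs_sum_le_sum_abs _ _
              _ ≤ ∑ k ∈ Finset.Icc 2 N, |c N k| * k := by
                  apply Finset.sum_le_sum
                  intro k hk
                  have hk1 : 1 ≤ k := by
                    have := (Finset.mem_Icc.1 hk).1; omega
                  rw [abs_mul, _root_.abs_of_nonneg (r_nonneg _ _)]
                  exact mul_le_mul_of_nonneg_left (r_le _ _ hk1) (abs_nonneg _)
    apply Summable.of_nonneg_of_le (fun n => by positivity) (fun n => ?_)
      (hwsummable.mul_left (C ^ p))
    exact mul_le_mul_of_nonneg_right
      (Real.rpow_le_rpow (abs_nonneg _) (hSb n) hp0.le) (hw_pos n).le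
  -- the dual series
  set g : ℕ → ℝ := fun n => (‖vv s n - vv s (n + 1)‖ * (w n) ^ (-(1 / p))) ^ q with hgdef
  have hg_nonneg : ∀ n, 0 ≤ g n := fun n => Real.rpow_nonneg (by positivity) _
  have hg_summable : Summable g := by
    set Cg : ℝ := (‖s‖ * 2 ^ (α * -(1 / p))) ^ q with hCgdef
    have hCg0 : 0 ≤ Cg := Real.rpow_nonneg (by positivity) _
    set e : ℝ := (-s.re - 1 + α * -(1 / p)) * q with hedef
    have he : e < -1 := by
      have hinv : p⁻¹ + q⁻¹ = 1 := hpq.inv_add_inv_eq_one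
      have h6 : -s.re - 1 + α * -(1 / p) < -q⁻¹ := by
        have h7 : -q⁻¹ = -(1 - p⁻¹) := by linarith
        rw [h7]
        have h8 : -(α + 1) / p < s.re := hsre
        have h9 : -(α + 1) / p = α * -(1 / p) - 1 / p := by ring
        rw [h9] at h8
        have h10 : (1 : ℝ) / p = p⁻¹ := one_div p
        linarith
      calc e = (-s.re - 1 + α * -(1 / p)) * q := hedef
        _ < -q⁻¹ * q := by exact mul_lt_mul_of_pos_right h6 hq0
        _ = -1 := by field_simp
    apply Summable.of_nonneg_of_le hg_nonneg (fun n => ?_)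
      ((summable_shift_rpow he).mul_left Cg)
    have hb1 : ‖vv s n - vv s (n + 1)‖ * (w n) ^ (-(1 / p)) ≤
        (‖s‖ * 2 ^ (α * -(1 / p))) * ((n : ℝ) + 1) ^ (-s.re - 1 + α * -(1 / p)) := by
      have hwn : (w n) ^ (-(1 / p)) = ((n : ℝ) + 2) ^ (α * -(1 / p)) := by
        simp only [hwdef]
        rw [← Real.rpow_mul (by positivity)]
      have hexp_pos : 0 ≤ α * -(1 / p) := by
        have : α ≤ 0 := by linarith
        have h1p : 0 ≤ 1 / p := by positivity
        nlinarith
      have hb2 : ((n : ℝ) + 2) ^ (α * -(1 / p)) ≤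
          (2 : ℝ) ^ (α * -(1 / p)) * ((n : ℝ) + 1) ^ (α * -(1 / p)) := by
        rw [← Real.mul_rpow (by norm_num) (by positivity)]
        apply Real.rpow_le_rpow (by positivity) (by linarith [Nat.cast_nonneg (α := ℝ) n])
          hexp_pos
      rw [hwn]
      calc ‖vv s n - vv s (n + 1)‖ * ((n : ℝ) + 2) ^ (α * -(1 / p))
          ≤ (‖s‖ * ((n : ℝ) + 1) ^ (-s.re - 1)) *
            ((2 : ℝ) ^ (α * -(1 / p)) * ((n : ℝ) + 1) ^ (α * -(1 / p))) := by
            apply mul_le_mul (dd_norm_le s hσ0 n) hb2 (Real.rpow_nonneg (by positivity) _)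
              (by positivity)
        _ = (‖s‖ * 2 ^ (α * -(1 / p))) * (((n : ℝ) + 1) ^ (-s.re - 1) *
            ((n : ℝ) + 1) ^ (α * -(1 / p))) := by ring
        _ = (‖s‖ * 2 ^ (α * -(1 / p))) * ((n : ℝ) + 1) ^ (-s.re - 1 + α * -(1 / p)) := by
            rw [← Real.rpow_add (by positivity)]
    calc g n ≤ ((‖s‖ * 2 ^ (α * -(1 / p))) * ((n : ℝ) + 1) ^ (-s.re - 1 + α * -(1 / p))) ^ q := by
          apply Real.rpow_le_rpow (by positivity) hb1 hq0.le
      _ = Cg * ((n : ℝ) + 1) ^ e := by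
          rw [Real.mul_rpow (by positivity) (Real.rpow_nonneg (by positivity) _), hCgdef,
            ← Real.rpow_mul (by positivity), hedef]
  set K : ℝ := ∑' n, g n with hKdef
  have hK0 : 0 ≤ K := tsum_nonneg hg_nonneg
  -- Young's inequality, fixed t
  set t : ℝ := (K + 1) ^ (q⁻¹) with htdef
  have ht0 : 0 < t := Real.rpow_pos_of_pos (by linarith) _
  have htq : t ^ q = K + 1 := by
    rw [htdef, ← Real.rpow_mul (by linarith : (0:ℝ) ≤ K + 1), inv_mul_cancel₀ hq0.ne',
      Real.rpow_one]
  have hineq : ∀ N, (1 : ℝ) ≤ t ^ p / p * T N + t⁻¹ ^ q / q * K := by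
    intro N
    have hf := hmain N
    have hfs : Summable (fun n => ‖((S N (n + 1) : ℝ) : ℂ) * (vv s n - vv s (n + 1))‖) :=
      summable_norm_iff.2 hf.summable
    have h2 : ‖∑' n, ((S N (n + 1) : ℝ) : ℂ) * (vv s n - vv s (n + 1))‖ = 1 := by
      rw [hf.tsum_eq]; simp
    have hpt : ∀ n, ‖((S N (n + 1) : ℝ) : ℂ) * (vv s n - vv s (n + 1))‖ ≤
        t ^ p / p * (|S N (n + 1)| ^ p * w n) + t⁻¹ ^ q / q * g n := by
      intro n
      set a : ℝ := t * (|S N (n + 1)| * (w n) ^ (1 / p)) with hadef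
      set b : ℝ := t⁻¹ * (‖vv s n - vv s (n + 1)‖ * (w n) ^ (-(1 / p))) with hbdef
      have ha0 : 0 ≤ a := by positivity
      have hb0 : 0 ≤ b := by positivity
      have hab : a * b = |S N (n + 1)| * ‖vv s n - vv s (n + 1)‖ := by
        have h3 : (w n) ^ (1 / p) * (w n) ^ (-(1 / p)) = 1 := by
          rw [← Real.rpow_add (hw_pos n)]; simp
        have h4 : t * t⁻¹ = 1 := mul_inv_cancel₀ ht0.ne'
        calc a * b = (t * t⁻¹) * ((w n) ^ (1 / p) * (w n) ^ (-(1 / p))) *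
            (|S N (n + 1)| * ‖vv s n - vv s (n + 1)‖) := by rw [hadef, hbdef]; ring
          _ = _ := by rw [h3, h4]; ring
      have hap : a ^ p = t ^ p * (|S N (n + 1)| ^ p * w n) := by
        rw [hadef, Real.mul_rpow ht0.le (by positivity),
          Real.mul_rpow (abs_nonneg _) (Real.rpow_nonneg (hw_pos n).le _),
          ← Real.rpow_mul (hw_pos n).le, one_div_mul_cancel hp0.ne', Real.rpow_one]
      have hbq : b ^ q = t⁻¹ ^ q * g n := by
        rw [hbdef, Real.mul_rpow (inv_nonneg.2 ht0.le) (by positivity), hgdef]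
      calc ‖((S N (n + 1) : ℝ) : ℂ) * (vv s n - vv s (n + 1))‖
          = |S N (n + 1)| * ‖vv s n - vv s (n + 1)‖ := by
            rw [norm_mul, Complex.norm_real, Real.norm_eq_abs]
        _ = a * b := hab.symm
        _ ≤ a ^ p / p + b ^ q / q := Real.young_inequality_of_nonneg ha0 hb0 hpq
        _ = t ^ p / p * (|S N (n + 1)| ^ p * w n) + t⁻¹ ^ q / q * g n := by
            rw [hap, hbq]; ring
    have hs1' : Summable (fun n => t ^ p / p * (|S N (n + 1)| ^ p * w n)) :=
      (hTsummable N).mul_left _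
    have hs2' : Summable (fun n => t⁻¹ ^ q / q * g n) := hg_summable.mul_left _
    calc (1 : ℝ) = ‖∑' n, ((S N (n + 1) : ℝ) : ℂ) * (vv s n - vv s (n + 1))‖ := h2.symm
      _ ≤ ∑' n, ‖((S N (n + 1) : ℝ) : ℂ) * (vv s n - vv s (n + 1))‖ :=
          norm_tsum_le_tsum_norm hfs
      _ ≤ ∑' n, (t ^ p / p * (|S N (n + 1)| ^ p * w n) + t⁻¹ ^ q / q * g n) :=
          hfs.tsum_le_tsum hpt (hs1'.add hs2')
      _ = t ^ p / p * T N + t⁻¹ ^ q / q * K := by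
          rw [Summable.tsum_add hs1' hs2', tsum_mul_left, tsum_mul_left]
  have hlim : Tendsto (fun N => t ^ p / p * T N + t⁻¹ ^ q / q * K) atTop
      (nhds (t ^ p / p * 0 + t⁻¹ ^ q / q * K)) :=
    (hT.const_mul _).add tendsto_const_nhds
  have hle : (1 : ℝ) ≤ t ^ p / p * 0 + t⁻¹ ^ q / q * K := ge_of_tendsto' hlim hineq
  have htinv : t⁻¹ ^ q = (K + 1)⁻¹ := by
    rw [Real.inv_rpow ht0.le, htq]
  rw [htinv, mul_zero, zero_add] at hle
  have hK1 : (0 : ℝ) < K + 1 := by linarith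
  have h1 : (K + 1)⁻¹ * K < 1 := by
    rw [inv_mul_lt_iff₀ hK1]
    linarith
  have h2' : (K + 1)⁻¹ * K / q < 1 := (div_lt_one hq0).2 (by linarith)
  have heq2 : (K + 1)⁻¹ / q * K = (K + 1)⁻¹ * K / q := by ring
  rw [heq2] at hle
  linarith
end

section
/- Let t ≥ 1 and let m = ∏_{i=1}^t p_i be the product of the first t prime numbers. Then for every integer n with 1 ≤ n < m, F'_m(n) = −#{k ∈ ℕ : 1 < k ≤ n and gcd(k,m) = 1}. -/
open Finset ArithmeticFunction

/-- `F'_m(n) = 1 + Σ_{k|m, 2≤k≤m} (μ(k)/k)·r_k(n) − (Σ_{k|m, 1≤k≤m} μ(k)/k)·r_m(n)`. -/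
noncomputable def F' (m n : ℕ) : ℝ :=
  1 + ∑ k ∈ (Finset.Icc 2 m).filter (· ∣ m), (moebius k : ℝ) / k * r k n
    - (∑ k ∈ (Finset.Icc 1 m).filter (· ∣ m), (moebius k : ℝ) / k) * r m n

lemma divisors_filter_dvd_eq (m j : ℕ) (hm : m ≠ 0) :
    m.divisors.filter (· ∣ j) = (Nat.gcd j m).divisors := by
  ext k
  simp only [Finset.mem_filter, Nat.mem_divisors]
  constructor
  · rintro ⟨⟨hkm, -⟩, hkj⟩
    exact ⟨Nat.dvd_gcd hkj hkm, fun h => hm (Nat.eq_zero_of_gcd_eq_zero_right h)⟩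
  · rintro ⟨hk, -⟩
    exact ⟨⟨hk.trans (Nat.gcd_dvd_right _ _), hm⟩, hk.trans (Nat.gcd_dvd_left _ _)⟩

lemma sum_moebius_divisors (N : ℕ) :
    ∑ k ∈ N.divisors, (moebius k : ℤ) = if N = 1 then 1 else 0 := by
  have h : (moebius * (zeta : ArithmeticFunction ℕ) : ArithmeticFunction ℤ) N
      = (1 : ArithmeticFunction ℤ) N := by rw [moebius_mul_coe_zeta]
  rwa [coe_mul_zeta_apply, one_apply] at h

lemma sum_moebius_div_eq (m n : ℕ) (hm : m ≠ 0) :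
    ∑ k ∈ m.divisors, (moebius k : ℤ) * (n / k : ℕ)
      = (((Finset.Ioc 0 n).filter (fun j => Nat.gcd j m = 1)).card : ℤ) := by
  calc ∑ k ∈ m.divisors, (moebius k : ℤ) * (n / k : ℕ)
      = ∑ k ∈ m.divisors, ∑ j ∈ Finset.Ioc 0 n,
          if k ∣ j then (moebius k : ℤ) else 0 := by
        refine Finset.sum_congr rfl fun k _ => ?_
        rw [← Finset.sum_filter, Finset.sum_const,
          ← Nat.Ioc_filter_dvd_card_eq_div, nsmul_eq_mul, mul_comm]
    _ = ∑ j ∈ Finset.Ioc 0 n, ∑ k ∈ m.divisors,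
          if k ∣ j then (moebius k : ℤ) else 0 := Finset.sum_comm
    _ = ∑ j ∈ Finset.Ioc 0 n, if Nat.gcd j m = 1 then (1 : ℤ) else 0 := by
        refine Finset.sum_congr rfl fun j _ => ?_
        rw [← Finset.sum_filter, divisors_filter_dvd_eq m j hm,
          sum_moebius_divisors]
    _ = (((Finset.Ioc 0 n).filter (fun j => Nat.gcd j m = 1)).card : ℤ) := by
        rw [← Finset.sum_filter]
        simp

theorem F'_eq_neg_card_coprime
    (t : ℕ) (ht : 1 ≤ t) (m : ℕ)
    (hm : m = ∏ i ∈ Finset.range t, Nat.nth Nat.Prime i) :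
    ∀ n : ℕ, 1 ≤ n → n < m →
      F' m n = -(((Finset.Ioc 1 n).filter (fun k => Nat.gcd k m = 1)).card : ℝ) := by
  intro n hn hnm
  have hm0 : m ≠ 0 := fun h => by omega
  -- the two filtered index sets are divisor sets
  have hA : (Finset.Icc 1 m).filter (· ∣ m) = m.divisors := by
    ext k
    simp only [Finset.mem_filter, Finset.mem_Icc, Nat.mem_divisors]
    constructor
    · rintro ⟨-, hk⟩; exact ⟨hk, hm0⟩
    · rintro ⟨hk, -⟩
      exact ⟨⟨Nat.one_le_iff_ne_zero.2 fun h => by simp [h] at hk; exact hm0 hk,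
        Nat.le_of_dvd (Nat.pos_of_ne_zero hm0) hk⟩, hk⟩
  have hB : (Finset.Icc 2 m).filter (· ∣ m) = m.divisors.erase 1 := by
    ext k
    simp only [Finset.mem_filter, Finset.mem_Icc, Nat.mem_divisors, Finset.mem_erase]
    constructor
    · rintro ⟨⟨h2, -⟩, hk⟩; exact ⟨by omega, hk, hm0⟩
    · rintro ⟨h1, hk, -⟩
      have hk0 : k ≠ 0 := fun h => by simp [h] at hk; exact hm0 hk
      exact ⟨⟨by omega, Nat.le_of_dvd (Nat.pos_of_ne_zero hm0) hk⟩, hk⟩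
  have hrm : r m n = (n : ℝ) := by
    simp [r, Nat.mod_eq_of_lt hnm]
  have hsum1 : ∑ k ∈ (Finset.Icc 2 m).filter (· ∣ m), (moebius k : ℝ) / k * r k n
      = ∑ k ∈ m.divisors, (moebius k : ℝ) / k * r k n := by
    rw [hB]
    exact Finset.sum_erase _ (by simp [r, Nat.mod_one])
  have key : F' m n
      = 1 - ∑ k ∈ m.divisors, (moebius k : ℝ) * ((n / k : ℕ) : ℝ) := by
    rw [F', hsum1, hA, hrm, Finset.sum_mul, add_sub_assoc, ← Finset.sum_sub_distrib,
      sub_eq_add_neg (1:ℝ), ← Finset.sum_neg_distrib]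
    congr 1
    refine Finset.sum_congr rfl fun k hk => ?_
    have hk0 : (k : ℝ) ≠ 0 := by
      have := Nat.pos_of_mem_divisors hk
      positivity
    have hmod : ((n % k : ℕ) : ℝ) = (n : ℝ) - (k : ℝ) * ((n / k : ℕ) : ℝ) := by
      have := Nat.mod_add_div n k
      have : ((n % k : ℕ) : ℝ) + (k : ℝ) * ((n / k : ℕ) : ℝ) = (n : ℝ) := by
        exact_mod_cast congrArg (fun x : ℕ => (x : ℝ)) this
      linarith
    rw [r, hmod]
    field_simp
    ring
  have hcount : (((Finset.Ioc 0 n).filter (fun j => Nat.gcd j m = 1)).card : ℤ)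
      = 1 + (((Finset.Ioc 1 n).filter (fun k => Nat.gcd k m = 1)).card : ℤ) := by
    have h1 : (Finset.Ioc 0 n) = insert 1 (Finset.Ioc 1 n) := by
      rw [Finset.Ioc_insert_left hn]
      ext x; simp; omega
    rw [h1, Finset.filter_insert]
    simp [Nat.gcd_one_left, Finset.card_insert_of_notMem (by simp : (1:ℕ) ∉ Finset.Ioc 1 n)]
    omega
  have hkey2 : ∑ k ∈ m.divisors, (moebius k : ℝ) * ((n / k : ℕ) : ℝ)
      = (((Finset.Ioc 0 n).filter (fun j => Nat.gcd j m = 1)).card : ℝ) := by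
    have h2 := congrArg (fun x : ℤ => (x : ℝ)) (sum_moebius_div_eq m n hm0)
    push_cast at h2
    exact h2
  rw [key, hkey2]
  have : (((Finset.Ioc 0 n).filter (fun j => Nat.gcd j m = 1)).card : ℝ)
      = 1 + (((Finset.Ioc 1 n).filter (fun k => Nat.gcd k m = 1)).card : ℝ) := by
    exact_mod_cast hcount
  rw [this]; ring
end

section
/- Let 1 ≤ p ≤ 2 and α = −p−1. There exists a constant C > 0 such that for all integers m ≥ 1, Σ_{n=1}^∞ |F_m(n)|^p (n+1)^α ≤ C. -/
open Finset ArithmeticFunction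

/-- `F_m(n) = 1 + Σ_{k=2}^m (μ(k)/k)·r_k(n) − (Σ_{k=1}^m μ(k)/k)·r_m(n)`. -/
noncomputable def F (m n : ℕ) : ℝ :=
  1 + ∑ k ∈ Finset.Icc 2 m, (moebius k : ℝ) / k * r k n
    - (∑ k ∈ Finset.Icc 1 m, (moebius k : ℝ) / k) * r m n

lemma sum_moebius_div_eq_one {n : ℕ} (hn : 1 ≤ n) :
    ∑ k ∈ Finset.Icc 1 n, (moebius k) * ((n / k : ℕ) : ℤ) = 1 := by
  have hIcc : Finset.Icc 1 n = Finset.Ioc 0 n := rfl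
  calc ∑ k ∈ Finset.Icc 1 n, (moebius k) * ((n / k : ℕ) : ℤ)
      = ∑ k ∈ Finset.Ioc 0 n, ∑ _j ∈ (Finset.Ioc 0 n).filter (k ∣ ·), moebius k := by
        rw [hIcc]
        refine Finset.sum_congr rfl fun k _ => ?_
        rw [Finset.sum_const, ← Nat.Ioc_filter_dvd_card_eq_div n k]
        push_cast [nsmul_eq_mul]
        ring
    _ = ∑ j ∈ Finset.Ioc 0 n, ∑ k ∈ (Finset.Ioc 0 n).filter (· ∣ j), moebius k := by
        refine Finset.sum_comm' fun k j => ?_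
        simp only [Finset.mem_filter]
        tauto
    _ = ∑ j ∈ Finset.Ioc 0 n, ∑ k ∈ j.divisors, moebius k := by
        refine Finset.sum_congr rfl fun j hj => ?_
        simp only [Finset.mem_Ioc] at hj
        congr 1
        ext k
        simp only [Finset.mem_filter, Finset.mem_Ioc, Nat.mem_divisors]
        constructor
        · rintro ⟨_, hk⟩; exact ⟨hk, by omega⟩
        · rintro ⟨hk, _⟩
          exact ⟨⟨Nat.pos_of_dvd_of_pos hk (by omega),
            le_trans (Nat.le_of_dvd (by omega) hk) hj.2⟩, hk⟩
    _ = ∑ j ∈ Finset.Ioc 0 n, if j = 1 then 1 else 0 := by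
        refine Finset.sum_congr rfl fun j _ => ?_
        rw [← coe_mul_zeta_apply, moebius_mul_coe_zeta, one_apply]
    _ = 1 := by
        rw [Finset.sum_ite_eq' (Finset.Ioc 0 n) 1 (fun _ => (1:ℤ))]
        simp [hn]

lemma sum_moebius_div_eq_one' {n : ℕ} (hn : 1 ≤ n) :
    ∑ k ∈ Finset.Icc 1 n, (moebius k : ℝ) * ((n / k : ℕ) : ℝ) = 1 := by
  have h2 : ((∑ k ∈ Finset.Icc 1 n, (moebius k) * ((n / k : ℕ) : ℤ) : ℤ) : ℝ) = 1 := by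
    rw [sum_moebius_div_eq_one hn]; norm_num
  push_cast at h2
  exact h2

lemma mod_cast_eq (k n : ℕ) :
    ((n % k : ℕ) : ℝ) = n - k * ((n / k : ℕ) : ℝ) := by
  have h := Nat.mod_add_div n k
  have h2 : ((n % k + k * (n / k) : ℕ) : ℝ) = n := by rw [h]
  push_cast at h2
  linarith

lemma abs_moebius_le (k : ℕ) : |(moebius k : ℝ)| ≤ 1 := by
  by_cases h : Squarefree k
  · rw [moebius_apply_of_squarefree h]
    push_cast
    rw [abs_pow, abs_neg, abs_one, one_pow]
  · rw [moebius_eq_zero_of_not_squarefree h]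
    norm_num

lemma icc_split {m : ℕ} (hm : 1 ≤ m) :
    Finset.Icc 1 m = insert 1 (Finset.Icc 2 m) := by
  ext x; simp only [Finset.mem_Icc, Finset.mem_insert]; omega

lemma one_notmem_icc2 (m : ℕ) : 1 ∉ Finset.Icc 2 m := by simp

/-- Lemma B: `|S_m| ≤ 1`. -/
lemma abs_S_le_one {m : ℕ} (hm : 1 ≤ m) :
    |∑ k ∈ Finset.Icc 1 m, (moebius k : ℝ) / k| ≤ 1 := by
  set S := ∑ k ∈ Finset.Icc 1 m, (moebius k : ℝ) / k with hS
  have key : (m : ℝ) * S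
      = 1 + ∑ k ∈ Finset.Icc 1 m, (moebius k : ℝ) / k * ((m % k : ℕ) : ℝ) := by
    have h1 : ∀ k ∈ Finset.Icc 1 m, (m : ℝ) * ((moebius k : ℝ) / k)
        = (moebius k : ℝ) * ((m / k : ℕ) : ℝ)
          + (moebius k : ℝ) / k * ((m % k : ℕ) : ℝ) := by
      intro k hk
      simp only [Finset.mem_Icc] at hk
      have hk0 : (k : ℝ) ≠ 0 := by
        have : 0 < k := by omega
        exact_mod_cast this.ne'
      rw [mod_cast_eq k m]
      field_simp
      ring
    rw [hS, Finset.mul_sum, Finset.sum_congr rfl h1, Finset.sum_add_distrib,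
      sum_moebius_div_eq_one' hm]
  have hbound : |∑ k ∈ Finset.Icc 1 m, (moebius k : ℝ) / k * ((m % k : ℕ) : ℝ)|
      ≤ (m : ℝ) - 1 := by
    calc |∑ k ∈ Finset.Icc 1 m, (moebius k : ℝ) / k * ((m % k : ℕ) : ℝ)|
        ≤ ∑ k ∈ Finset.Icc 1 m, |(moebius k : ℝ) / k * ((m % k : ℕ) : ℝ)| :=
          Finset.abs_sum_le_sum_abs _ _
      _ ≤ ∑ k ∈ Finset.Icc 1 m, (if k = 1 then (0:ℝ) else 1) := by
          refine Finset.sum_le_sum fun k hk => ?_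
          simp only [Finset.mem_Icc] at hk
          by_cases hk1 : k = 1
          · subst hk1; simp [Nat.mod_one]
          · rw [if_neg hk1]
            have hkpos : (0:ℝ) < k := by
              have : 0 < k := by omega
              exact_mod_cast this
            have h1 : |(moebius k : ℝ)| ≤ 1 := abs_moebius_le k
            have h2 : ((m % k : ℕ) : ℝ) ≤ k := by
              have : m % k < k := Nat.mod_lt m (by omega)
              exact_mod_cast this.le
            rw [abs_mul, abs_div, Nat.abs_cast, Nat.abs_cast]
            calc |(moebius k : ℝ)| / k * ((m % k : ℕ) : ℝ)
                ≤ 1 / k * k := by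
                  apply mul_le_mul _ h2 (Nat.cast_nonneg _) (by positivity)
                  gcongr
              _ = 1 := by field_simp
      _ = (m : ℝ) - 1 := by
          rw [icc_split hm, Finset.sum_insert (one_notmem_icc2 m), if_pos rfl]
          rw [Finset.sum_congr rfl (fun k hk => if_neg (by
            simp only [Finset.mem_Icc] at hk; omega))]
          rw [Finset.sum_const, Nat.card_Icc]
          simp only [Finset.sum_const, Nat.card_Icc, nsmul_eq_mul, mul_one]
          rw [show m + 1 - 2 = m - 1 by omega, Nat.cast_pred (by omega)]
          ring
  have hm0 : (0:ℝ) < m := by exact_mod_cast (by omega : 0 < m)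
  have : |(m:ℝ) * S| ≤ (m:ℝ) := by
    rw [key]
    calc |1 + _| ≤ |(1:ℝ)| + |∑ k ∈ Finset.Icc 1 m, (moebius k : ℝ) / k * ((m % k : ℕ) : ℝ)| :=
          abs_add_le _ _
      _ ≤ 1 + ((m:ℝ) - 1) := by rw [abs_one]; linarith
      _ = (m:ℝ) := by ring
  rw [abs_mul, Nat.abs_cast] at this
  calc |S| = (m:ℝ) * |S| / m := by field_simp
    _ ≤ (m:ℝ) / m := by gcongr
    _ = 1 := by field_simp

/-- Lemma C: `F m n = 0` for `1 ≤ n < m`. -/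
lemma F_eq_zero {m n : ℕ} (hn : 1 ≤ n) (hnm : n < m) : F m n = 0 := by
  have hm : 1 ≤ m := by omega
  have hsub : ∑ k ∈ Finset.Icc 1 m, (moebius k : ℝ) * ((n / k : ℕ) : ℝ) = 1 := by
    rw [← sum_moebius_div_eq_one' hn]
    refine (Finset.sum_subset (Finset.Icc_subset_Icc_right (by omega)) ?_).symm
    intro x hx hx'
    simp only [Finset.mem_Icc] at hx hx'
    have : n / x = 0 := Nat.div_eq_of_lt (by omega)
    rw [this]
    norm_num
  have hsplit1 : ∑ k ∈ Finset.Icc 1 m, (moebius k : ℝ) / k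
      = 1 + ∑ k ∈ Finset.Icc 2 m, (moebius k : ℝ) / k := by
    rw [icc_split hm, Finset.sum_insert (one_notmem_icc2 m)]
    simp [moebius_apply_one]
  have hsplit2 : ∑ k ∈ Finset.Icc 1 m, (moebius k : ℝ) * ((n / k : ℕ) : ℝ)
      = (n : ℝ) + ∑ k ∈ Finset.Icc 2 m, (moebius k : ℝ) * ((n / k : ℕ) : ℝ) := by
    rw [icc_split hm, Finset.sum_insert (one_notmem_icc2 m)]
    simp [moebius_apply_one]
  have e1 : ∑ k ∈ Finset.Icc 2 m, (moebius k : ℝ) * ((n / k : ℕ) : ℝ) = 1 - (n : ℝ) := by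
    rw [hsub] at hsplit2; linarith
  have hterm : ∀ k ∈ Finset.Icc 2 m, (moebius k : ℝ) / k * r k n
      = (moebius k : ℝ) / k * n - (moebius k : ℝ) * ((n / k : ℕ) : ℝ) := by
    intro k hk
    simp only [Finset.mem_Icc] at hk
    have hk0 : (k : ℝ) ≠ 0 := by
      have : 0 < k := by omega
      exact_mod_cast this.ne'
    rw [r, mod_cast_eq k n]
    field_simp
  have hrm : r m n = n := by rw [r, Nat.mod_eq_of_lt hnm]
  rw [F, hrm, Finset.sum_congr rfl hterm, Finset.sum_sub_distrib, ← Finset.sum_mul, e1,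
    hsplit1]
  ring

/-- Lemma D: `|F m n| ≤ 2m`. -/
lemma abs_F_le {m : ℕ} (hm : 1 ≤ m) (n : ℕ) : |F m n| ≤ 2 * (m : ℝ) := by
  have hA : |∑ k ∈ Finset.Icc 2 m, (moebius k : ℝ) / k * r k n| ≤ (m : ℝ) - 1 := by
    calc |∑ k ∈ Finset.Icc 2 m, (moebius k : ℝ) / k * r k n|
        ≤ ∑ k ∈ Finset.Icc 2 m, |(moebius k : ℝ) / k * r k n| :=
          Finset.abs_sum_le_sum_abs _ _
      _ ≤ ∑ _k ∈ Finset.Icc 2 m, (1:ℝ) := by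
          refine Finset.sum_le_sum fun k hk => ?_
          simp only [Finset.mem_Icc] at hk
          have hkpos : (0:ℝ) < k := by
            have : 0 < k := by omega
            exact_mod_cast this
          have h1 : |(moebius k : ℝ)| ≤ 1 := abs_moebius_le k
          have h2 : r k n ≤ (k : ℝ) := by
            rw [r]
            have : n % k < k := Nat.mod_lt n (by omega)
            exact_mod_cast this.le
          have h3 : (0:ℝ) ≤ r k n := by rw [r]; positivity
          rw [abs_mul, abs_div, Nat.abs_cast, abs_of_nonneg h3]
          calc |(moebius k : ℝ)| / k * r k n ≤ 1 / k * k := by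
                apply mul_le_mul _ h2 h3 (by positivity)
                gcongr
            _ = 1 := by field_simp
      _ = (m : ℝ) - 1 := by
          simp only [Finset.sum_const, Nat.card_Icc, nsmul_eq_mul, mul_one]
          rw [show m + 1 - 2 = m - 1 by omega, Nat.cast_pred (by omega)]
  have hB : |(∑ k ∈ Finset.Icc 1 m, (moebius k : ℝ) / k) * r m n| ≤ (m : ℝ) := by
    rw [abs_mul]
    have h3 : (0:ℝ) ≤ r m n := by rw [r]; positivity
    have h2 : r m n ≤ (m : ℝ) := by
      rw [r]
      have : n % m < m := Nat.mod_lt n (by omega)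
      exact_mod_cast this.le
    rw [abs_of_nonneg h3]
    calc |∑ k ∈ Finset.Icc 1 m, (moebius k : ℝ) / k| * r m n ≤ 1 * (m:ℝ) :=
        mul_le_mul (abs_S_le_one hm) h2 h3 zero_le_one
      _ = (m:ℝ) := one_mul _
  rw [F]
  calc |1 + ∑ k ∈ Finset.Icc 2 m, (moebius k : ℝ) / k * r k n
        - (∑ k ∈ Finset.Icc 1 m, (moebius k : ℝ) / k) * r m n|
      ≤ |1 + ∑ k ∈ Finset.Icc 2 m, (moebius k : ℝ) / k * r k n|
        + |(∑ k ∈ Finset.Icc 1 m, (moebius k : ℝ) / k) * r m n| := abs_sub _ _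
    _ ≤ |(1:ℝ)| + |∑ k ∈ Finset.Icc 2 m, (moebius k : ℝ) / k * r k n|
        + |(∑ k ∈ Finset.Icc 1 m, (moebius k : ℝ) / k) * r m n| := by
          have := abs_add_le (1:ℝ) (∑ k ∈ Finset.Icc 2 m, (moebius k : ℝ) / k * r k n)
          linarith
    _ ≤ 1 + ((m:ℝ) - 1) + (m:ℝ) := by rw [abs_one]; linarith
    _ = 2 * (m:ℝ) := by ring

/-- Lemma E : Bernoulli tail estimate. -/
lemma tail_est {a : ℝ} (ha : 1 ≤ a) {p : ℝ} (hp : 1 ≤ p) :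
    p * (a + 1) ^ (-p - 1) ≤ a ^ (-p) - (a + 1) ^ (-p) := by
  have ha0 : (0:ℝ) < a := lt_of_lt_of_le one_pos ha
  have ha1 : (0:ℝ) < a + 1 := by linarith
  have hp0 : (0:ℝ) < p := lt_of_lt_of_le one_pos hp
  have hA : (0:ℝ) < a ^ p := Real.rpow_pos_of_pos ha0 p
  have hB : (0:ℝ) < (a + 1) ^ p := Real.rpow_pos_of_pos ha1 p
  have hbern : 1 + p * (1 / a) ≤ (1 + 1 / a) ^ p :=
    one_add_mul_self_le_rpow_one_add
      (le_trans (by norm_num : (-1:ℝ) ≤ 0) (by positivity)) hp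
  have h2 : 1 + 1 / a = (a + 1) / a := by field_simp
  have h3 : ((a + 1) / a) ^ p = (a + 1) ^ p / a ^ p := Real.div_rpow (by linarith) ha0.le p
  have h4 : 1 + p / (a + 1) ≤ (a + 1) ^ p / a ^ p := by
    have h5 : p / (a + 1) ≤ p / a := by gcongr <;> linarith
    have h6 : p / a = p * (1 / a) := by ring
    calc 1 + p / (a + 1) ≤ 1 + p * (1 / a) := by rw [← h6]; linarith
      _ ≤ (1 + 1 / a) ^ p := hbern
      _ = (a + 1) ^ p / a ^ p := by rw [h2, h3]
  have key2 : a ^ p * (a + 1) + p * a ^ p ≤ (a + 1) ^ p * (a + 1) := by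
    have h5 := mul_le_mul_of_nonneg_right h4 (show (0:ℝ) ≤ a ^ p * (a + 1) by positivity)
    calc a ^ p * (a + 1) + p * a ^ p = (1 + p / (a + 1)) * (a ^ p * (a + 1)) := by
          field_simp
      _ ≤ (a + 1) ^ p / a ^ p * (a ^ p * (a + 1)) := h5
      _ = (a + 1) ^ p * (a + 1) := by field_simp
  have e1 : (a + 1) ^ (-p - 1) = ((a + 1) ^ p * (a + 1))⁻¹ := by
    rw [show -p - 1 = -(p + 1) by ring, Real.rpow_neg ha1.le, Real.rpow_add ha1,
      Real.rpow_one]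
  have e2 : a ^ (-p) = (a ^ p)⁻¹ := Real.rpow_neg ha0.le p
  have e3 : (a + 1) ^ (-p) = ((a + 1) ^ p)⁻¹ := Real.rpow_neg ha1.le p
  rw [e1, e2, e3, inv_eq_one_div, inv_eq_one_div, inv_eq_one_div, mul_one_div,
    div_sub_div _ _ hA.ne' hB.ne', div_le_div_iff₀ (by positivity) (by positivity)]
  nlinarith [mul_le_mul_of_nonneg_left key2 hB.le, mul_pos hA hB, mul_pos hB ha1]

theorem F_norm_bounded (p α : ℝ) (hp1 : 1 ≤ p) (hp2 : p ≤ 2) (hα : α = -p - 1) :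
    ∃ C : ℝ, 0 < C ∧ ∀ m : ℕ, 1 ≤ m →
      ∑' n : ℕ, |F m (n + 1)| ^ p * ((n : ℝ) + 2) ^ α ≤ C := by
  refine ⟨4, by norm_num, fun m hm => ?_⟩
  have hp0 : (0:ℝ) < p := by linarith
  have hmR : (1:ℝ) ≤ (m:ℝ) := by exact_mod_cast hm
  have hmpos : (0:ℝ) < m := by linarith
  set c : ℝ := (2*(m:ℝ))^p / p with hc
  have hcnn : 0 ≤ c := by positivity
  set f : ℕ → ℝ := fun n => ((n:ℝ)+1) ^ (-p) with hf
  have hfnn : ∀ n : ℕ, 0 ≤ f n := fun n => Real.rpow_nonneg (by positivity) _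
  set g : ℕ → ℝ := fun n => if m ≤ n + 1 then c * (f n - f (n+1)) else 0 with hg
  have hgnn : ∀ n : ℕ, 0 ≤ |F m (n+1)| ^ p * ((n:ℝ)+2) ^ α :=
    fun n => mul_nonneg (Real.rpow_nonneg (abs_nonneg _) _)
      (Real.rpow_nonneg (by positivity) _)
  apply Real.tsum_le_of_sum_range_le hgnn
  intro N
  have hpoint : ∀ n : ℕ, |F m (n+1)| ^ p * ((n:ℝ)+2) ^ α ≤ g n := by
    intro n
    by_cases hcase : m ≤ n + 1
    · have htail := tail_est (a := (n:ℝ)+1)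
        (by linarith [Nat.cast_nonneg (α := ℝ) n]) hp1
      have hfs : f (n+1) = ((n:ℝ)+1+1) ^ (-p) := by simp only [hf]; push_cast; ring_nf
      have hαle : ((n:ℝ)+2) ^ α ≤ (f n - f (n+1)) / p := by
        rw [hα, le_div_iff₀ hp0, hfs]
        simp only [hf]
        have h22 : (n:ℝ)+2 = (n:ℝ)+1+1 := by ring
        rw [h22]
        calc ((n:ℝ)+1+1)^(-p-1) * p = p * (((n:ℝ)+1)+1)^(-p-1) := by ring_nf
          _ ≤ _ := htail
      have hFb : |F m (n+1)| ^ p ≤ (2*(m:ℝ)) ^ p :=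
        Real.rpow_le_rpow (abs_nonneg _) (abs_F_le hm (n+1)) (by linarith)
      simp only [hg]
      rw [if_pos hcase]
      calc |F m (n+1)| ^ p * ((n:ℝ)+2) ^ α ≤ (2*(m:ℝ))^p * ((f n - f (n+1)) / p) :=
            mul_le_mul hFb hαle (Real.rpow_nonneg (by positivity) _) (by positivity)
        _ = c * (f n - f (n+1)) := by rw [hc]; ring
    · simp only [hg]
      rw [if_neg hcase, F_eq_zero (by omega) (by omega), abs_zero,
        Real.zero_rpow (by linarith : p ≠ 0), zero_mul]
  have hsum : ∀ K : ℕ, ∑ n ∈ Finset.range K, g n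
      = if m ≤ K then c * (f (m-1) - f K) else 0 := by
    intro K
    induction K with
    | zero => rw [Finset.sum_range_zero, if_neg (by omega)]
    | succ K ih =>
      rw [Finset.sum_range_succ, ih]
      simp only [hg]
      by_cases h1 : m ≤ K
      · rw [if_pos h1, if_pos (by omega : m ≤ K + 1), if_pos (by omega : m ≤ K + 1)]
        ring
      · by_cases h2 : m ≤ K + 1
        · have hmK : m - 1 = K := by omega
          rw [if_neg h1, if_pos h2, if_pos h2, hmK]
          ring
        · rw [if_neg h1, if_neg h2, if_neg h2]
          ring
  calc ∑ n ∈ Finset.range N, |F m (n+1)|^p * ((n:ℝ)+2)^α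
      ≤ ∑ n ∈ Finset.range N, g n := Finset.sum_le_sum fun n _ => hpoint n
    _ ≤ c * f (m-1) := by
        rw [hsum N]
        by_cases h1 : m ≤ N
        · rw [if_pos h1]
          have h7 := mul_nonneg hcnn (hfnn N)
          nlinarith [mul_nonneg hcnn (hfnn (m-1))]
        · rw [if_neg h1]
          exact mul_nonneg hcnn (hfnn (m-1))
    _ ≤ 4 := by
        have hfm : f (m-1) = (m:ℝ) ^ (-p) := by
          simp only [hf]
          rw [Nat.cast_pred (by omega)]
          ring_nf
        rw [hfm, hc]
        have hmul : (2*(m:ℝ))^p = 2^p * (m:ℝ)^p := Real.mul_rpow (by norm_num) (by positivity)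
        have hmm : (m:ℝ)^p * (m:ℝ)^(-p) = 1 := by
          rw [← Real.rpow_add hmpos]
          norm_num
        have h2p : (2:ℝ)^p ≤ 4 := by
          calc (2:ℝ)^p ≤ (2:ℝ)^(2:ℝ) := Real.rpow_le_rpow_of_exponent_le (by norm_num) hp2
            _ = (2:ℝ)^((2:ℕ):ℝ) := by norm_num
            _ = (2:ℝ)^(2:ℕ) := Real.rpow_natCast 2 2
            _ = 4 := by norm_num
        calc (2*(m:ℝ))^p / p * (m:ℝ)^(-p) = 2^p * ((m:ℝ)^p * (m:ℝ)^(-p)) / p := by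
              rw [hmul]; ring
          _ = 2^p / p := by rw [hmm]; ring
          _ ≤ 2^p := div_le_self (by positivity) hp1
          _ ≤ 4 := h2p
end

section
/- For all integers m and n with 1 ≤ n < m, F_m(n) = 0. -/
open Finset ArithmeticFunction

lemma moebius_floor_key (n : ℕ) (hn : 1 ≤ n) :
    ∑ k ∈ Icc 1 n, (moebius k : ℤ) * (n / k : ℕ) = 1 := by
  have hIoc : Icc 1 n = Ioc 0 n := Finset.Icc_add_one_left_eq_Ioc 0 n
  calc ∑ k ∈ Icc 1 n, (moebius k : ℤ) * (n / k : ℕ)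
      = ∑ k ∈ Icc 1 n, ∑ j ∈ Icc 1 n, if k ∣ j then (moebius k : ℤ) else 0 := by
        refine sum_congr rfl fun k hk => ?_
        rw [← Finset.sum_filter, Finset.sum_const, nsmul_eq_mul]
        rw [hIoc, Nat.Ioc_filter_dvd_card_eq_div, mul_comm]
    _ = ∑ j ∈ Icc 1 n, ∑ k ∈ Icc 1 n, if k ∣ j then (moebius k : ℤ) else 0 :=
        Finset.sum_comm
    _ = ∑ j ∈ Icc 1 n, if j = 1 then 1 else 0 := by
        refine sum_congr rfl fun j hj => ?_
        rw [mem_Icc] at hj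
        rw [← Finset.sum_filter]
        have hdiv : {k ∈ Icc 1 n | k ∣ j} = j.divisors := by
          ext k
          simp only [mem_filter, mem_Icc, Nat.mem_divisors]
          constructor
          · rintro ⟨⟨hk1, hkn⟩, hkj⟩
            exact ⟨hkj, by omega⟩
          · rintro ⟨hkj, hj0⟩
            have hk1 : 1 ≤ k := Nat.one_le_iff_ne_zero.mpr (by rintro rfl; simp at hkj; omega)
            exact ⟨⟨hk1, (Nat.le_of_dvd (by omega) hkj).trans hj.2⟩, hkj⟩
        rw [hdiv, ← ArithmeticFunction.coe_mul_zeta_apply,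
          ArithmeticFunction.moebius_mul_coe_zeta, ArithmeticFunction.one_apply]
    _ = 1 := by
        rw [Finset.sum_ite_eq' (Icc 1 n) 1 (fun _ => (1 : ℤ))]
        simp [hn]

lemma moebius_floor_key_real (n : ℕ) (hn : 1 ≤ n) :
    ∑ k ∈ Ioc 0 n, (moebius k : ℝ) * (n / k : ℕ) = 1 := by
  have h := moebius_floor_key n hn
  have h2 : ((∑ k ∈ Icc 1 n, (moebius k : ℤ) * (n / k : ℕ) : ℤ) : ℝ) = 1 := by
    rw [h]; norm_num
  rw [← Finset.Icc_add_one_left_eq_Ioc 0 n, ← h2, Int.cast_sum]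
  refine sum_congr rfl fun k hk => ?_
  rw [Int.cast_mul, Int.cast_natCast]

lemma moebius_floor_Ioc_one (n : ℕ) (hn : 1 ≤ n) :
    ∑ k ∈ Ioc 1 n, (moebius k : ℝ) * (n / k : ℕ) = 1 - n := by
  have hsplit := Finset.sum_Ioc_consecutive (fun k => (moebius k : ℝ) * (n / k : ℕ))
    (show (0:ℕ) ≤ 1 by omega) hn
  rw [moebius_floor_key_real n hn] at hsplit
  have h01 : Ioc (0:ℕ) 1 = {1} := rfl
  rw [h01] at hsplit
  simp only [Finset.sum_singleton, Nat.div_one, moebius_apply_one] at hsplit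
  push_cast at hsplit
  linarith

theorem F_eq_zero_of_lt (m n : ℕ) (hn : 1 ≤ n) (hnm : n < m) : F m n = 0 := by
  unfold F r
  rw [Nat.mod_eq_of_lt hnm]
  have hIcc2 : Icc 2 m = Ioc 1 m := Finset.Icc_add_one_left_eq_Ioc 1 m
  have hIcc1 : Icc 1 m = Ioc 0 m := Finset.Icc_add_one_left_eq_Ioc 0 m
  rw [hIcc2, hIcc1]
  rw [← Finset.sum_Ioc_consecutive (fun k => (moebius k : ℝ) / k * ((n % k : ℕ) : ℝ))
    hn hnm.le]
  rw [← Finset.sum_Ioc_consecutive (fun k => (moebius k : ℝ) / k) (Nat.zero_le n) hnm.le]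
  have htail : ∑ k ∈ Ioc n m, (moebius k : ℝ) / k * ((n % k : ℕ) : ℝ)
      = (∑ k ∈ Ioc n m, (moebius k : ℝ) / k) * n := by
    rw [Finset.sum_mul]
    refine sum_congr rfl fun k hk => ?_
    rw [mem_Ioc] at hk
    rw [Nat.mod_eq_of_lt hk.1]
  have hhead : ∑ k ∈ Ioc 1 n, (moebius k : ℝ) / k * ((n % k : ℕ) : ℝ)
      = (∑ k ∈ Ioc 1 n, (moebius k : ℝ) / k) * n - (1 - n) := by
    rw [← moebius_floor_Ioc_one n hn, Finset.sum_mul, ← Finset.sum_sub_distrib]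
    refine sum_congr rfl fun k hk => ?_
    rw [mem_Ioc] at hk
    have hk0 : (k : ℝ) ≠ 0 := Nat.cast_ne_zero.mpr (by omega)
    have hmod : ((n % k : ℕ) : ℝ) = n - k * ((n / k : ℕ) : ℝ) := by
      have h := Nat.mod_add_div n k
      have h2 : ((n % k : ℕ) : ℝ) + k * ((n / k : ℕ) : ℝ) = n := by exact_mod_cast h
      linarith
    rw [hmod]
    field_simp
  have hg : ∑ k ∈ Ioc 0 n, (moebius k : ℝ) / k
      = 1 + ∑ k ∈ Ioc 1 n, (moebius k : ℝ) / k := by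
    rw [← Finset.sum_Ioc_consecutive (fun k => (moebius k : ℝ) / k) (Nat.zero_le 1) hn]
    have h01 : Ioc (0:ℕ) 1 = {1} := rfl
    rw [h01]
    simp
  rw [htail, hhead, hg]
  ring
end

section
/- For all integers m ≥ 1 and n ≥ 1, |F_m(n)| < 2m. -/
open Finset ArithmeticFunction

lemma moebius_sum_floor (m : ℕ) (hm : 1 ≤ m) :
    ∑ k ∈ Finset.Icc 1 m, (moebius k : ℤ) * (m / k : ℕ) = 1 := by
  have h1 : ∀ k ∈ Finset.Icc 1 m, (moebius k : ℤ) * (m / k : ℕ)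
      = ∑ x ∈ (Finset.Ioc 0 m).filter (k ∣ ·), (moebius k : ℤ) := by
    intro k _
    rw [Finset.sum_const, Nat.Ioc_filter_dvd_card_eq_div m k, nsmul_eq_mul, mul_comm]
  rw [Finset.sum_congr rfl h1]
  simp_rw [Finset.sum_filter]
  rw [Finset.sum_comm]
  have h2 : ∀ x ∈ Finset.Ioc 0 m,
      (∑ k ∈ Finset.Icc 1 m, if k ∣ x then (moebius k : ℤ) else 0)
        = if x = 1 then 1 else 0 := by
    intro x hx
    rw [Finset.mem_Ioc] at hx
    rw [← Finset.sum_filter]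
    have hfil : (Finset.Icc 1 m).filter (· ∣ x) = x.divisors := by
      ext k
      simp only [Finset.mem_filter, Finset.mem_Icc, Nat.mem_divisors]
      constructor
      · rintro ⟨⟨hk1, _⟩, hkx⟩
        exact ⟨hkx, by omega⟩
      · rintro ⟨hkx, hx0⟩
        have hk1 : 1 ≤ k := Nat.pos_of_dvd_of_pos hkx hx.1
        have hkm : k ≤ m := le_trans (Nat.le_of_dvd hx.1 hkx) hx.2
        exact ⟨⟨hk1, hkm⟩, hkx⟩
    rw [hfil, ← coe_mul_zeta_apply, moebius_mul_coe_zeta, one_apply]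
  rw [Finset.sum_congr rfl h2, Finset.sum_ite_eq' (Finset.Ioc 0 m) 1 (fun _ => (1 : ℤ)),
    if_pos (Finset.mem_Ioc.mpr ⟨one_pos, hm⟩)]

lemma abs_moebius_sum_div_le_one (m : ℕ) (hm : 1 ≤ m) :
    |∑ k ∈ Finset.Icc 1 m, (moebius k : ℝ) / k| ≤ 1 := by
  set c : ℝ := ∑ k ∈ Finset.Icc 1 m, (moebius k : ℝ) / k with hc
  have hicc : Finset.Icc 1 m = insert 1 (Finset.Icc 2 m) := by
    ext k; simp only [Finset.mem_Icc, Finset.mem_insert]; omega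
  have hkey : (m : ℝ) * c = 1 + ∑ k ∈ Finset.Icc 2 m, (moebius k : ℝ) * ((m % k : ℕ) / k) := by
    have hsplit : ∀ k ∈ Finset.Icc 1 m,
        (m : ℝ) * ((moebius k : ℝ) / k)
          = (moebius k : ℝ) * ((m / k : ℕ) : ℝ) + (moebius k : ℝ) * ((m % k : ℕ) / k) := by
      intro k hk
      rw [Finset.mem_Icc] at hk
      have hk0 : (k : ℝ) ≠ 0 := Nat.cast_ne_zero.mpr (by omega)
      have hmod : ((m / k : ℕ) : ℝ) * k + ((m % k : ℕ) : ℝ) = m := by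
        exact_mod_cast congrArg (Nat.cast : ℕ → ℝ) (Nat.div_add_mod' m k)
      field_simp
      rw [← hmod]; ring
    rw [Finset.mul_sum, Finset.sum_congr rfl hsplit, Finset.sum_add_distrib]
    have h1 : ∑ k ∈ Finset.Icc 1 m, (moebius k : ℝ) * ((m / k : ℕ) : ℝ) = 1 := by
      have := moebius_sum_floor m hm
      have := congrArg (fun z : ℤ => (z : ℝ)) this
      simp only [Int.cast_sum, Int.cast_mul, Int.cast_natCast, Int.cast_one] at this
      convert this using 2
    have h2 : ∑ k ∈ Finset.Icc 1 m, (moebius k : ℝ) * ((m % k : ℕ) / k)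
        = ∑ k ∈ Finset.Icc 2 m, (moebius k : ℝ) * ((m % k : ℕ) / k) := by
      rw [hicc, Finset.sum_insert (by simp)]
      simp [Nat.mod_one]
    rw [h1, h2]
  have hE : |∑ k ∈ Finset.Icc 2 m, (moebius k : ℝ) * ((m % k : ℕ) / k)| ≤ (m : ℝ) - 1 := by
    calc |∑ k ∈ Finset.Icc 2 m, (moebius k : ℝ) * ((m % k : ℕ) / k)|
        ≤ ∑ k ∈ Finset.Icc 2 m, |(moebius k : ℝ) * ((m % k : ℕ) / k)| :=
          Finset.abs_sum_le_sum_abs _ _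
      _ ≤ ∑ k ∈ Finset.Icc 2 m, 1 := by
          apply Finset.sum_le_sum
          intro k hk
          rw [Finset.mem_Icc] at hk
          have hk0 : (0 : ℝ) < k := by exact_mod_cast (by omega : 0 < k)
          have hmu : |(moebius k : ℝ)| ≤ 1 := by
            have := abs_moebius_le_one (n := k)
            calc |(moebius k : ℝ)| = ((|moebius k| : ℤ) : ℝ) := by push_cast; simp
              _ ≤ 1 := by exact_mod_cast this
          have hr : |((m % k : ℕ) : ℝ) / k| ≤ 1 := by
            rw [abs_of_nonneg (by positivity), div_le_one hk0]
            exact_mod_cast (Nat.mod_lt m (by omega)).le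
          calc |(moebius k : ℝ) * ((m % k : ℕ) / k)|
              = |(moebius k : ℝ)| * |((m % k : ℕ) : ℝ) / k| := abs_mul _ _
            _ ≤ 1 * 1 := by
                exact mul_le_mul hmu hr (abs_nonneg _) zero_le_one
            _ = 1 := one_mul 1
      _ = ((m : ℝ) - 1) := by
          rw [Finset.sum_const, Nat.card_Icc]
          simp only [nsmul_eq_mul, mul_one]
          have h : m + 1 - 2 = m - 1 := by omega
          rw [h, Nat.cast_sub hm, Nat.cast_one]
  have hmpos : (0 : ℝ) < m := by exact_mod_cast hm
  have : |(m : ℝ) * c| ≤ m := by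
    rw [hkey]
    calc |1 + ∑ k ∈ Finset.Icc 2 m, (moebius k : ℝ) * ((m % k : ℕ) / k)|
        ≤ 1 + |∑ k ∈ Finset.Icc 2 m, (moebius k : ℝ) * ((m % k : ℕ) / k)| := by
          calc _ ≤ |(1 : ℝ)| + _ := abs_add_le _ _
            _ = _ := by rw [abs_one]
      _ ≤ 1 + ((m : ℝ) - 1) := by linarith
      _ = m := by ring
  rw [abs_mul, abs_of_pos hmpos] at this
  nlinarith [this, hmpos]

theorem abs_F_lt_two_mul (m n : ℕ) (hm : 1 ≤ m) (hn : 1 ≤ n) :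
    |F m n| < 2 * m := by
  clear hn
  have hmpos : (0 : ℝ) < m := by exact_mod_cast hm
  have hS : |∑ k ∈ Finset.Icc 2 m, (moebius k : ℝ) / k * r k n| ≤ (m : ℝ) - 1 := by
    calc |∑ k ∈ Finset.Icc 2 m, (moebius k : ℝ) / k * r k n|
        ≤ ∑ k ∈ Finset.Icc 2 m, |(moebius k : ℝ) / k * r k n| :=
          Finset.abs_sum_le_sum_abs _ _
      _ ≤ ∑ k ∈ Finset.Icc 2 m, 1 := by
          apply Finset.sum_le_sum
          intro k hk
          rw [Finset.mem_Icc] at hk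
          have hk0 : (0 : ℝ) < k := by exact_mod_cast (by omega : 0 < k)
          have hmu : |(moebius k : ℝ)| ≤ 1 := by
            have := abs_moebius_le_one (n := k)
            calc |(moebius k : ℝ)| = ((|moebius k| : ℤ) : ℝ) := by push_cast; simp
              _ ≤ 1 := by exact_mod_cast this
          have hr : |r k n / k| ≤ 1 := by
            rw [r, abs_of_nonneg (by positivity), div_le_one hk0]
            exact_mod_cast (Nat.mod_lt n (by omega)).le
          calc |(moebius k : ℝ) / k * r k n|
              = |(moebius k : ℝ)| * |r k n / k| := by
                rw [← abs_mul]; ring_nf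
            _ ≤ 1 * 1 := mul_le_mul hmu hr (abs_nonneg _) zero_le_one
            _ = 1 := one_mul 1
      _ = ((m : ℝ) - 1) := by
          rw [Finset.sum_const, Nat.card_Icc]
          simp only [nsmul_eq_mul, mul_one]
          have h : m + 1 - 2 = m - 1 := by omega
          rw [h, Nat.cast_sub hm, Nat.cast_one]
  have hc := abs_moebius_sum_div_le_one m hm
  have hrm : |r m n| ≤ (m : ℝ) - 1 := by
    rw [r, abs_of_nonneg (Nat.cast_nonneg _)]
    have : n % m ≤ m - 1 := by
      have := Nat.mod_lt n (show 0 < m by omega)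
      omega
    calc ((n % m : ℕ) : ℝ) ≤ ((m - 1 : ℕ) : ℝ) := by exact_mod_cast this
      _ = (m : ℝ) - 1 := by push_cast [hm]; ring
  have hcr : |(∑ k ∈ Finset.Icc 1 m, (moebius k : ℝ) / k) * r m n| ≤ (m : ℝ) - 1 := by
    rw [abs_mul]
    calc |∑ k ∈ Finset.Icc 1 m, (moebius k : ℝ) / k| * |r m n|
        ≤ 1 * ((m : ℝ) - 1) := mul_le_mul hc hrm (abs_nonneg _) zero_le_one
      _ = (m : ℝ) - 1 := one_mul _
  rw [F]
  calc |1 + ∑ k ∈ Finset.Icc 2 m, (moebius k : ℝ) / k * r k n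
        - (∑ k ∈ Finset.Icc 1 m, (moebius k : ℝ) / k) * r m n|
      ≤ |(1 : ℝ)| + |∑ k ∈ Finset.Icc 2 m, (moebius k : ℝ) / k * r k n|
        + |(∑ k ∈ Finset.Icc 1 m, (moebius k : ℝ) / k) * r m n| := by
        apply (abs_sub _ _).trans
        gcongr
        exact abs_add_le _ _
    _ ≤ 1 + ((m : ℝ) - 1) + ((m : ℝ) - 1) := by rw [abs_one]; linarith
    _ = 2 * m - 1 := by ring
    _ < 2 * m := by linarith
end

section
/- Let s ∈ (0,1) and let m, n be integers with m ≥ 1 and n ≥ m^{1/s}. Then |H(n,m)| ≤ (n/m)^{s/(1−s)}. -/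
open Finset ArithmeticFunction

/-- `H n m = Σ_{k=2}^m μ(k)·{n/k}`. -/
noncomputable def H (n m : ℕ) : ℝ :=
  ∑ k ∈ Finset.Icc 2 m, (moebius k : ℝ) * Int.fract ((n : ℝ) / k)

theorem abs_H_le (s : ℝ) (hs0 : 0 < s) (hs1 : s < 1)
    (m n : ℕ) (hm : 1 ≤ m) (hn : (m : ℝ) ^ (1 / s) ≤ (n : ℝ)) :
    |H n m| ≤ ((n : ℝ) / m) ^ (s / (1 - s)) := by
  have hm0 : (0:ℝ) < m := by exact_mod_cast hm
  have hs1' : 0 < 1 - s := by linarith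
  -- Step 1: |H n m| ≤ m
  have h1 : |H n m| ≤ (m : ℝ) := by
    calc |H n m| ≤ ∑ k ∈ Finset.Icc 2 m, |(moebius k : ℝ) * Int.fract ((n : ℝ) / k)| :=
          Finset.abs_sum_le_sum_abs _ _
      _ ≤ ∑ k ∈ Finset.Icc 2 m, 1 := by
          refine Finset.sum_le_sum fun k _ => ?_
          rw [abs_mul]
          have hμ : |(moebius k : ℝ)| ≤ 1 := by
            by_cases hk : Squarefree k
            · rw [ArithmeticFunction.moebius_apply_of_squarefree hk]
              simp [abs_pow]
            · rw [ArithmeticFunction.moebius_eq_zero_of_not_squarefree hk]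
              simp
          have hf : |Int.fract ((n : ℝ) / k)| ≤ 1 := by
            rw [abs_of_nonneg (Int.fract_nonneg _)]
            exact le_of_lt (Int.fract_lt_one _)
          calc |(moebius k : ℝ)| * |Int.fract ((n : ℝ) / k)| ≤ 1 * 1 :=
                mul_le_mul hμ hf (abs_nonneg _) zero_le_one
            _ = 1 := by ring
      _ = (Finset.Icc 2 m).card := by simp
      _ ≤ (m : ℝ) := by
          have : (Finset.Icc 2 m).card ≤ m := by
            rw [Nat.card_Icc]; omega
          exact_mod_cast this
  -- Step 2: m^((1-s)/s) ≤ n/m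
  have hnm : (m : ℝ) ^ ((1 - s) / s) ≤ (n : ℝ) / m := by
    rw [le_div_iff₀ hm0]
    calc (m : ℝ) ^ ((1 - s) / s) * m = (m : ℝ) ^ ((1 - s) / s) * (m : ℝ) ^ (1:ℝ) := by
          rw [Real.rpow_one]
      _ = (m : ℝ) ^ ((1 - s) / s + 1) := (Real.rpow_add hm0 _ _).symm
      _ = (m : ℝ) ^ (1 / s) := by
          congr 1
          field_simp
          ring
      _ ≤ (n : ℝ) := hn
  -- Step 3: m ≤ (n/m)^(s/(1-s))
  have h2 : (m : ℝ) ≤ ((n : ℝ) / m) ^ (s / (1 - s)) := by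
    calc (m : ℝ) = ((m : ℝ) ^ ((1 - s) / s)) ^ (s / (1 - s)) := by
          rw [← Real.rpow_mul hm0.le]
          rw [show (1 - s) / s * (s / (1 - s)) = 1 by
            field_simp]
          exact (Real.rpow_one _).symm
      _ ≤ ((n : ℝ) / m) ^ (s / (1 - s)) :=
          Real.rpow_le_rpow (Real.rpow_nonneg hm0.le _) hnm
            (div_nonneg hs0.le hs1'.le)
  linarith
end

section
/- For all integers n ≥ 1 and m ≥ 1, Σ_{k=1}^m μ(k)·⌊n/k⌋ = 1 + Σ_{t=1}^{⌊n/m⌋} (M(m) − M(⌊n/t⌋)). -/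
open Finset ArithmeticFunction

/-- Mertens function `M x = Σ_{n=1}^x μ(n)`. -/
def M (x : ℕ) : ℤ := ∑ n ∈ Finset.Icc 1 x, moebius n

lemma nat_le_div_iff {n k t : ℕ} (hk : 1 ≤ k) : t ≤ n / k ↔ k * t ≤ n := by
  rw [Nat.le_div_iff_mul_le hk, Nat.mul_comm]

lemma filter_eq_Icc (n k : ℕ) (hk : 1 ≤ k) :
    (Finset.Icc 1 n).filter (fun t => k * t ≤ n) = Finset.Icc 1 (n / k) := by
  ext t
  simp only [mem_filter, mem_Icc]
  constructor
  · rintro ⟨⟨h1, _⟩, h3⟩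
    exact ⟨h1, (nat_le_div_iff hk).2 h3⟩
  · rintro ⟨h1, h2⟩
    exact ⟨⟨h1, le_trans h2 (Nat.div_le_self n k)⟩, (nat_le_div_iff hk).1 h2⟩

lemma sum_divisors_moebius (j : ℕ) :
    ∑ d ∈ j.divisors, (moebius d : ℤ) = if j = 1 then 1 else 0 := by
  have := ArithmeticFunction.coe_mul_zeta_apply (f := (moebius : ArithmeticFunction ℤ)) (x := j)
  rw [ArithmeticFunction.moebius_mul_coe_zeta] at this
  rw [← this, ArithmeticFunction.one_apply]

lemma sum_M_div (n : ℕ) (hn : 1 ≤ n) :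
    ∑ t ∈ Finset.Icc 1 n, M (n / t) = 1 := by
  have h : ∑ t ∈ Finset.Icc 1 n, M (n / t)
      = ∑ p ∈ (Finset.Icc 1 n).sigma (fun t => Finset.Icc 1 (n / t)), (moebius p.2 : ℤ) := by
    rw [Finset.sum_sigma]; rfl
  rw [h]
  have h2 : ∑ p ∈ (Finset.Icc 1 n).sigma (fun t => Finset.Icc 1 (n / t)), (moebius p.2 : ℤ)
      = ∑ p ∈ (Finset.Icc 1 n).sigma (fun j => j.divisors), (moebius p.2 : ℤ) := by
    apply Finset.sum_nbij' (fun p => ⟨p.1 * p.2, p.2⟩) (fun p => ⟨p.1 / p.2, p.2⟩)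
    · rintro ⟨t, k⟩ hp
      simp only [Finset.mem_sigma, mem_Icc] at hp ⊢
      obtain ⟨⟨h1, h2⟩, h3, h4⟩ := hp
      have hk : t * k ≤ n := (nat_le_div_iff h1).1 h4
      refine ⟨⟨Nat.mul_pos h1 h3, hk⟩, ?_⟩
      exact Nat.mem_divisors.2 ⟨⟨t, mul_comm t k⟩, Nat.mul_ne_zero (by omega) (by omega)⟩
    · rintro ⟨j, d⟩ hp
      simp only [Finset.mem_sigma, mem_Icc] at hp ⊢
      obtain ⟨⟨h1, h2⟩, h3⟩ := hp
      rw [Nat.mem_divisors] at h3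
      obtain ⟨hd, _⟩ := h3
      have hd1 : 1 ≤ d := Nat.pos_of_dvd_of_pos hd (by omega)
      have hjd : 1 ≤ j / d := Nat.one_le_div_iff hd1 |>.2 (Nat.le_of_dvd (by omega) hd)
      refine ⟨⟨hjd, le_trans (Nat.div_le_self j d) h2⟩, hd1, ?_⟩
      rw [nat_le_div_iff hjd, Nat.div_mul_cancel hd]
      exact h2
    · rintro ⟨t, k⟩ hp
      simp only [Finset.mem_sigma, mem_Icc] at hp
      obtain ⟨⟨h1, h2⟩, h3, h4⟩ := hp
      have hc : t * k / k = t := Nat.mul_div_cancel t h3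
      simp [hc]
    · rintro ⟨j, d⟩ hp
      simp only [Finset.mem_sigma, mem_Icc] at hp
      obtain ⟨⟨h1, h2⟩, h3⟩ := hp
      rw [Nat.mem_divisors] at h3
      have hc : j / d * d = j := Nat.div_mul_cancel h3.1
      simp [hc]
    · intro p hp; rfl
  rw [h2, Finset.sum_sigma]
  rw [Finset.sum_congr rfl (fun j _ => sum_divisors_moebius j),
    Finset.sum_ite_eq' (Finset.Icc 1 n) 1 (fun _ => (1 : ℤ))]
  simp [hn]

theorem moebius_floor_sum_eq_mertens (n m : ℕ) (hn : 1 ≤ n) (hm : 1 ≤ m) :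
    ∑ k ∈ Finset.Icc 1 m, moebius k * ((n / k : ℕ) : ℤ) =
      1 + ∑ t ∈ Finset.Icc 1 (n / m), (M m - M (n / t)) := by
  have lhs_eq : ∑ k ∈ Finset.Icc 1 m, moebius k * ((n / k : ℕ) : ℤ)
      = ∑ t ∈ Finset.Icc 1 n, M (min m (n / t)) := by
    have e1 : ∀ k ∈ Finset.Icc 1 m, moebius k * ((n / k : ℕ) : ℤ)
        = ∑ t ∈ (Finset.Icc 1 n).filter (fun t => k * t ≤ n), (moebius k : ℤ) := by
      intro k hk
      rw [mem_Icc] at hk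
      rw [filter_eq_Icc n k hk.1, Finset.sum_const, Nat.card_Icc]
      simp [mul_comm]
    have e2 : ∀ t ∈ Finset.Icc 1 n, M (min m (n / t))
        = ∑ k ∈ (Finset.Icc 1 m).filter (fun k => k * t ≤ n), (moebius k : ℤ) := by
      intro t ht
      rw [mem_Icc] at ht
      have hf : (Finset.Icc 1 m).filter (fun k => k * t ≤ n) = Finset.Icc 1 (min m (n / t)) := by
        ext k
        simp only [mem_filter, mem_Icc, le_min_iff]
        constructor
        · rintro ⟨⟨h1, h2⟩, h3⟩
          refine ⟨h1, h2, ?_⟩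
          rw [Nat.le_div_iff_mul_le ht.1]
          exact h3
        · rintro ⟨h1, h2, h3⟩
          rw [Nat.le_div_iff_mul_le ht.1] at h3
          exact ⟨⟨h1, h2⟩, h3⟩
      rw [hf, M]
    rw [Finset.sum_congr rfl e1, Finset.sum_congr rfl e2, Finset.sum_sigma', Finset.sum_sigma']
    apply Finset.sum_nbij' (fun p => ⟨p.2, p.1⟩) (fun p => ⟨p.2, p.1⟩)
    · rintro ⟨k, t⟩ hp
      simp only [Finset.mem_sigma, mem_filter, mem_Icc] at hp ⊢
      obtain ⟨hk, ht, htn⟩ := hp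
      exact ⟨ht, hk, htn⟩
    · rintro ⟨t, k⟩ hp
      simp only [Finset.mem_sigma, mem_filter, mem_Icc] at hp ⊢
      obtain ⟨ht, hk, hkn⟩ := hp
      exact ⟨hk, ht, hkn⟩
    · rintro ⟨k, t⟩ _; rfl
    · rintro ⟨t, k⟩ _; rfl
    · rintro ⟨k, t⟩ _; rfl
  rw [lhs_eq]
  have hnm : n / m ≤ n := Nat.div_le_self n m
  have hsplit : ∀ a : ℕ, a ≤ n → ∀ f : ℕ → ℤ, ∑ t ∈ Finset.Icc 1 n, f t
      = ∑ t ∈ Finset.Icc 1 a, f t + ∑ t ∈ Finset.Icc (a + 1) n, f t := by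
    intro a ha f
    rw [← Finset.sum_union]
    · congr 1
      ext t
      simp only [mem_union, mem_Icc]
      omega
    · rw [Finset.disjoint_left]
      intro t h1 h2
      simp only [mem_Icc] at h1 h2
      omega
  rw [hsplit (n / m) hnm]
  have e3 : ∀ t ∈ Finset.Icc 1 (n / m), M (min m (n / t)) = M m := by
    intro t ht
    rw [mem_Icc] at ht
    have h1 : m * t ≤ n := (nat_le_div_iff hm).1 ht.2
    have : m ≤ n / t := by
      rw [Nat.le_div_iff_mul_le ht.1]
      exact h1
    rw [min_eq_left this]
  have e4 : ∀ t ∈ Finset.Icc (n / m + 1) n, M (min m (n / t)) = M (n / t) := by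
    intro t ht
    rw [mem_Icc] at ht
    have ht1 : 1 ≤ t := le_trans (Nat.succ_le_succ (Nat.zero_le _)) ht.1
    have : n / t ≤ m := by
      by_contra h
      push_neg at h
      have h2 : m ≤ n / t := le_of_lt h
      rw [Nat.le_div_iff_mul_le ht1] at h2
      have : t ≤ n / m := (nat_le_div_iff hm).2 h2
      exact Nat.not_succ_le_self (n / m) (le_trans ht.1 this)
    rw [min_eq_right this]
  rw [Finset.sum_congr rfl e3, Finset.sum_congr rfl e4]
  have key := sum_M_div n hn
  rw [hsplit (n / m) hnm (fun t => M (n / t))] at key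
  rw [Finset.sum_sub_distrib]
  simp only [Finset.sum_const, nsmul_eq_mul]
  linarith [key]
end

section
/- Let m ≥ 1, q ≥ 1 be integers and let d, d' ∈ {0, 1, …, m−1}. Set n = qm + d and n' = qm + d'. Then |G(n,m) − G(n',m)| ≤ q + Σ_{t=1}^{min(|d−d'|, q)} |d−d'|/t. -/
open Finset ArithmeticFunction

/-- `G n m = Σ_{k=1}^m μ(k)·⌊n/k⌋`. -/
def G (n m : ℕ) : ℤ := ∑ k ∈ Finset.Icc 1 m, moebius k * ((n / k : ℕ) : ℤ)

lemma G_eq (n m : ℕ) :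
    G n m = ∑ v ∈ Finset.Ioc 0 n, ∑ k ∈ (Finset.Icc 1 m).filter (· ∣ v), (moebius k : ℤ) := by
  unfold G
  have h : ∀ k, ((n / k : ℕ) : ℤ) = ∑ v ∈ Finset.Ioc 0 n, if k ∣ v then (1 : ℤ) else 0 := by
    intro k
    rw [← Finset.sum_filter]
    simp [Nat.Ioc_filter_dvd_card_eq_div]
  simp_rw [h, Finset.mul_sum, mul_ite, mul_one, mul_zero]
  rw [Finset.sum_comm]
  simp_rw [← Finset.sum_filter]

lemma sum_mu_eq_zero {v : ℕ} (hv : 2 ≤ v) : ∑ k ∈ v.divisors, (moebius k : ℤ) = 0 := by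
  have h := congrArg (fun f : ArithmeticFunction ℤ => f v) moebius_mul_coe_zeta
  simp only [coe_mul_zeta_apply, one_apply] at h
  rw [h, if_neg (by omega)]

lemma f_bound (m q v : ℕ) (hm : 1 ≤ m) (hq : 1 ≤ q) (h1 : q * m < v) (h2 : v < (q + 1) * m) :
    |∑ k ∈ (Finset.Icc 1 m).filter (· ∣ v), (moebius k : ℤ)| ≤
      (((Finset.Icc 1 q).filter (· ∣ v)).card : ℤ) := by
  have hv2 : 2 ≤ v := by nlinarith
  have hv0 : v ≠ 0 := by omega
  have hset : (Finset.Icc 1 m).filter (· ∣ v) = v.divisors.filter (· ≤ m) := by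
    ext k
    simp only [Finset.mem_filter, Finset.mem_Icc, Nat.mem_divisors]
    constructor
    · rintro ⟨⟨h1, h2⟩, h3⟩; exact ⟨⟨h3, hv0⟩, h2⟩
    · rintro ⟨⟨h3, _⟩, h2⟩
      exact ⟨⟨Nat.pos_of_dvd_of_pos h3 (Nat.pos_of_ne_zero hv0), h2⟩, h3⟩
  have hsplit : ∑ k ∈ v.divisors.filter (· ≤ m), (moebius k : ℤ)
      + ∑ k ∈ v.divisors.filter (fun k => ¬ k ≤ m), (moebius k : ℤ) = 0 := by
    rw [Finset.sum_filter_add_sum_filter_not]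
    exact sum_mu_eq_zero hv2
  have heq : ∑ k ∈ (Finset.Icc 1 m).filter (· ∣ v), (moebius k : ℤ)
      = - ∑ k ∈ v.divisors.filter (fun k => ¬ k ≤ m), (moebius k : ℤ) := by
    rw [hset]; linarith
  rw [heq, abs_neg]
  calc |∑ k ∈ v.divisors.filter (fun k => ¬ k ≤ m), (moebius k : ℤ)|
      ≤ ∑ k ∈ v.divisors.filter (fun k => ¬ k ≤ m), |(moebius k : ℤ)| :=
        Finset.abs_sum_le_sum_abs _ _
    _ ≤ ∑ k ∈ v.divisors.filter (fun k => ¬ k ≤ m), 1 :=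
        Finset.sum_le_sum fun k _ => abs_moebius_le_one
    _ = ((v.divisors.filter (fun k => ¬ k ≤ m)).card : ℤ) := by simp
    _ ≤ (((Finset.Icc 1 q).filter (· ∣ v)).card : ℤ) := by
        have : (v.divisors.filter (fun k => ¬ k ≤ m)).card
            ≤ ((Finset.Icc 1 q).filter (· ∣ v)).card := by
          apply Finset.card_le_card_of_injOn (fun k => v / k)
          · intro k hk
            simp only [Finset.mem_coe, Finset.mem_filter, Nat.mem_divisors, not_le] at hk
            obtain ⟨⟨hkv, _⟩, hkm⟩ := hk
            have hk0 : 0 < k := by omega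
            have hdvd : v / k ∣ v := Nat.div_dvd_of_dvd hkv
            have hkle : k ≤ v := Nat.le_of_dvd (Nat.pos_of_ne_zero hv0) hkv
            have h1' : 1 ≤ v / k := Nat.one_le_div_iff hk0 |>.mpr hkle
            have h2' : v / k ≤ q := by
              have hmul : (v / k) * k = v := Nat.div_mul_cancel hkv
              by_contra hc
              push_neg at hc
              have h3 : (q + 1) * k ≤ (v / k) * k := Nat.mul_le_mul_right k hc
              have h4 : (q + 1) * m < (q + 1) * k := by nlinarith
              nlinarith
            simp only [Finset.mem_coe, Finset.mem_filter, Finset.mem_Icc]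
            exact ⟨⟨h1', h2'⟩, hdvd⟩
          · intro a ha b hb hab
            simp only [Finset.coe_filter, Set.mem_setOf_eq, Nat.mem_divisors] at ha hb
            simp only at hab
            have h5 : v / (v / a) = a := Nat.div_div_self ha.1.1 hv0
            rw [hab, Nat.div_div_self hb.1.1 hv0] at h5
            omega
        exact_mod_cast this

lemma mult_count (N j : ℕ) :
    ∑ v ∈ Finset.Ioc 0 N, (if j ∣ v then (1:ℤ) else 0) = ((N / j : ℕ) : ℤ) := by
  rw [← Finset.sum_filter]
  simp [Nat.Ioc_filter_dvd_card_eq_div]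

lemma count_eq (n' n q : ℕ) (h : n' ≤ n) :
    ∑ v ∈ Finset.Ioc n' n, (((Finset.Icc 1 q).filter (· ∣ v)).card : ℤ)
      = ∑ j ∈ Finset.Icc 1 q, (((n / j : ℕ) : ℤ) - ((n' / j : ℕ) : ℤ)) := by
  have hcard : ∀ v, (((Finset.Icc 1 q).filter (· ∣ v)).card : ℤ)
      = ∑ j ∈ Finset.Icc 1 q, (if j ∣ v then (1:ℤ) else 0) := by
    intro v; rw [← Finset.sum_filter]; simp
  simp_rw [hcard]
  rw [Finset.sum_comm]
  apply Finset.sum_congr rfl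
  intro j _
  have h2 := Finset.sum_Ioc_consecutive (fun v => if j ∣ v then (1:ℤ) else 0)
    (Nat.zero_le n') h
  have e1 := mult_count n j
  have e2 := mult_count n' j
  linarith

lemma div_diff_le (n' D j : ℕ) (hj : 0 < j) :
    (n' + D) / j - n' / j ≤ D / j + 1 := by
  have key : (n' + D) / j < n' / j + D / j + 2 := by
    rw [Nat.div_lt_iff_lt_mul hj]
    have a1 := Nat.lt_div_mul_add (a := n') hj
    have a2 := Nat.lt_div_mul_add (a := D) hj
    ring_nf
    ring_nf at a1 a2
    linarith
  exact Nat.sub_le_iff_le_add.mpr (by linarith)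

lemma div_diff_le_one (n' D j : ℕ) (hj : 0 < j) (hD : D < j) :
    (n' + D) / j - n' / j ≤ 1 := by
  have key : (n' + D) / j < n' / j + 2 := by
    rw [Nat.div_lt_iff_lt_mul hj]
    have a1 := Nat.lt_div_mul_add (a := n') hj
    ring_nf
    ring_nf at a1
    linarith
  exact Nat.sub_le_iff_le_add.mpr (by linarith)

lemma real_bound (n' D q : ℕ) :
    ∑ j ∈ Finset.Icc 1 q, (((n' + D) / j - n' / j : ℕ) : ℝ)
      ≤ q + ∑ t ∈ Finset.Icc 1 (min D q), (D : ℝ) / t := by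
  have hIcc : ∀ N : ℕ, Finset.Icc 1 N = Finset.Ioc 0 N := by
    intro N; rw [← Finset.Icc_add_one_left_eq_Ioc, zero_add]
  set a := min D q with ha
  have haq : a ≤ q := min_le_right _ _
  rw [hIcc q, hIcc a]
  rw [← Finset.sum_Ioc_consecutive (fun j => (((n' + D) / j - n' / j : ℕ) : ℝ))
    (Nat.zero_le a) haq]
  have part1 : ∑ j ∈ Finset.Ioc 0 a, (((n' + D) / j - n' / j : ℕ) : ℝ)
      ≤ (a : ℝ) + ∑ t ∈ Finset.Ioc 0 a, (D : ℝ) / t := by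
    have : ∀ j ∈ Finset.Ioc 0 a, (((n' + D) / j - n' / j : ℕ) : ℝ) ≤ 1 + (D : ℝ) / j := by
      intro j hj
      simp only [Finset.mem_Ioc] at hj
      calc (((n' + D) / j - n' / j : ℕ) : ℝ) ≤ ((D / j + 1 : ℕ) : ℝ) := by
            exact_mod_cast Nat.cast_le.mpr (div_diff_le n' D j hj.1)
        _ = ((D / j : ℕ) : ℝ) + 1 := by push_cast; ring
        _ ≤ (D : ℝ) / j + 1 := by gcongr; exact Nat.cast_div_le
        _ = 1 + (D : ℝ) / j := by ring
    calc ∑ j ∈ Finset.Ioc 0 a, (((n' + D) / j - n' / j : ℕ) : ℝ)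
        ≤ ∑ j ∈ Finset.Ioc 0 a, (1 + (D : ℝ) / j) := Finset.sum_le_sum this
      _ = (a : ℝ) + ∑ t ∈ Finset.Ioc 0 a, (D : ℝ) / t := by
          rw [Finset.sum_add_distrib]
          simp [Nat.card_Ioc]
  have part2 : ∑ j ∈ Finset.Ioc a q, (((n' + D) / j - n' / j : ℕ) : ℝ)
      ≤ ((q - a : ℕ) : ℝ) := by
    calc ∑ j ∈ Finset.Ioc a q, (((n' + D) / j - n' / j : ℕ) : ℝ)
        ≤ ∑ j ∈ Finset.Ioc a q, (1 : ℝ) := by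
          apply Finset.sum_le_sum
          intro j hj
          simp only [Finset.mem_Ioc] at hj
          have hj0 : 0 < j := by omega
          have hD : D < j := by omega
          exact_mod_cast Nat.cast_le.mpr (div_diff_le_one n' D j hj0 hD)
      _ = ((q - a : ℕ) : ℝ) := by simp [Nat.card_Ioc]
  have hcast : (a : ℝ) + ((q - a : ℕ) : ℝ) = (q : ℝ) := by
    have : a + (q - a) = q := by omega
    exact_mod_cast congrArg (Nat.cast : ℕ → ℝ) this
  linarith

lemma diff_le (m q d d' : ℕ) (hm : 1 ≤ m) (hq : 1 ≤ q) (hd : d < m) (hd' : d' < m)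
    (hdd : d' ≤ d) :
    |G (q * m + d) m - G (q * m + d') m| ≤
      ∑ j ∈ Finset.Icc 1 q, (((q * m + d) / j - (q * m + d') / j : ℕ) : ℤ) := by
  have hn'n : q * m + d' ≤ q * m + d := by omega
  rw [G_eq, G_eq]
  have hsum := Finset.sum_Ioc_consecutive
    (fun v => ∑ k ∈ (Finset.Icc 1 m).filter (· ∣ v), (moebius k : ℤ))
    (Nat.zero_le (q * m + d')) hn'n
  have hdiff : ∑ v ∈ Finset.Ioc 0 (q * m + d), ∑ k ∈ (Finset.Icc 1 m).filter (· ∣ v), (moebius k : ℤ)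
      - ∑ v ∈ Finset.Ioc 0 (q * m + d'), ∑ k ∈ (Finset.Icc 1 m).filter (· ∣ v), (moebius k : ℤ)
      = ∑ v ∈ Finset.Ioc (q * m + d') (q * m + d), ∑ k ∈ (Finset.Icc 1 m).filter (· ∣ v), (moebius k : ℤ) := by
    linarith
  rw [hdiff]
  calc |∑ v ∈ Finset.Ioc (q * m + d') (q * m + d), ∑ k ∈ (Finset.Icc 1 m).filter (· ∣ v), (moebius k : ℤ)|
      ≤ ∑ v ∈ Finset.Ioc (q * m + d') (q * m + d), |∑ k ∈ (Finset.Icc 1 m).filter (· ∣ v), (moebius k : ℤ)| :=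
        Finset.abs_sum_le_sum_abs _ _
    _ ≤ ∑ v ∈ Finset.Ioc (q * m + d') (q * m + d), (((Finset.Icc 1 q).filter (· ∣ v)).card : ℤ) := by
        apply Finset.sum_le_sum
        intro v hv
        simp only [Finset.mem_Ioc] at hv
        exact f_bound m q v hm hq (by omega) (by nlinarith)
    _ = ∑ j ∈ Finset.Icc 1 q, (((q * m + d) / j : ℕ) : ℤ) - ∑ j ∈ Finset.Icc 1 q, (((q * m + d') / j : ℕ) : ℤ) := by
        rw [count_eq _ _ _ hn'n, Finset.sum_sub_distrib]
    _ = ∑ j ∈ Finset.Icc 1 q, (((q * m + d) / j - (q * m + d') / j : ℕ) : ℤ) := by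
        rw [← Finset.sum_sub_distrib]
        apply Finset.sum_congr rfl
        intro j _
        rw [Nat.cast_sub (Nat.div_le_div_right hn'n)]

theorem G_close_values (m q d d' : ℕ) (hm : 1 ≤ m) (hq : 1 ≤ q)
    (hd : d < m) (hd' : d' < m) :
    |(G (q * m + d) m : ℝ) - (G (q * m + d') m : ℝ)| ≤
      (q : ℝ) + ∑ t ∈ Finset.Icc 1 (min ((d : ℤ) - d').natAbs q),
        (((d : ℤ) - d').natAbs : ℝ) / t := by
  wlog hdd : d' ≤ d generalizing d d' with H
  · have h := H d' d hd' hd (by omega)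
    have hsym : ((d' : ℤ) - d).natAbs = ((d : ℤ) - d').natAbs := by omega
    rw [hsym, abs_sub_comm] at h
    exact h
  set D := d - d' with hDdef
  have hD : ((d : ℤ) - d').natAbs = D := by omega
  rw [hD]
  have h1 := diff_le m q d d' hm hq hd hd' hdd
  have h2 := real_bound (q * m + d') D q
  have hnn : q * m + d' + D = q * m + d := by omega
  rw [hnn] at h2
  calc |(G (q * m + d) m : ℝ) - (G (q * m + d') m : ℝ)|
      = |((G (q * m + d) m - G (q * m + d') m : ℤ) : ℝ)| := by push_cast; ring_nf
    _ ≤ ((∑ j ∈ Finset.Icc 1 q, (((q * m + d) / j - (q * m + d') / j : ℕ) : ℤ)) : ℝ) := by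
        rw [← Int.cast_abs]
        exact_mod_cast h1
    _ = ∑ j ∈ Finset.Icc 1 q, (((q * m + d) / j - (q * m + d') / j : ℕ) : ℝ) := by push_cast; rfl
    _ ≤ (q : ℝ) + ∑ t ∈ Finset.Icc 1 (min D q), (D : ℝ) / t := h2
end

section
/- There exists a constant C > 0 such that for every integer t ≥ 2, setting m = ∏_{i=1}^t p_i (the product of the first t primes) and s_t(n) := ((φ(m) − 1)/(m − p_t))·(r_{p_t}(n) − r_m(n)), one has for every integer n with 1 ≤ n < m: | s_t(n) + n·φ(m)/m | ≤ C·p_t/log(log m). -/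
open Finset

noncomputable def finv : ℕ →* ℝ where
  toFun n := (n : ℝ)⁻¹
  map_one' := by norm_num
  map_mul' x y := by push_cast; exact mul_inv _ _

lemma euler_harmonic (N : ℕ) (hN : 2 ≤ N) :
    Real.log N ≤ ∏ p ∈ N.primesBelow, ((1:ℝ) - (p:ℝ)⁻¹)⁻¹ := by
  have hlt : ∀ {p : ℕ}, p.Prime → ‖finv p‖ < 1 := by
    intro p hp
    have h2 : (2:ℝ) ≤ p := by exact_mod_cast hp.two_le
    simp only [finv, MonoidHom.coe_mk, OneHom.coe_mk, Real.norm_eq_abs]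
    rw [abs_of_nonneg (by positivity)]
    rw [inv_lt_one_iff₀]
    right; linarith
  obtain ⟨hs, hhas⟩ :=
    EulerProduct.summable_and_hasSum_smoothNumbers_prod_primesBelow_geometric hlt N
  have hhas' : HasSum (fun m : N.smoothNumbers ↦ ((m : ℕ) : ℝ)⁻¹)
      (∏ p ∈ N.primesBelow, ((1:ℝ) - (p:ℝ)⁻¹)⁻¹) := hhas
  have hsum := hhas'.summable
  have hind : Summable (N.smoothNumbers.indicator fun n : ℕ => (n:ℝ)⁻¹) :=
    (summable_subtype_iff_indicator (s := N.smoothNumbers)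
      (f := fun n : ℕ => (n:ℝ)⁻¹)).mp hsum
  calc Real.log N ≤ (harmonic (N-1) : ℝ) := by
        have h := log_add_one_le_harmonic (N-1)
        rwa [Nat.sub_add_cancel (one_le_two.trans hN)] at h
    _ = ∑ i ∈ Finset.Icc 1 (N-1), ((i:ℝ))⁻¹ := by
        rw [harmonic_eq_sum_Icc]; push_cast; rfl
    _ = ∑ i ∈ Finset.Icc 1 (N-1),
          Set.indicator N.smoothNumbers (fun n : ℕ => (n:ℝ)⁻¹) i := by
        refine Finset.sum_congr rfl fun i hi => ?_
        rw [Finset.mem_Icc] at hi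
        rw [Set.indicator_of_mem]
        exact Nat.mem_smoothNumbers_of_lt hi.1 (lt_of_le_of_lt hi.2 (by omega))
    _ ≤ ∑' i : ℕ, Set.indicator N.smoothNumbers (fun n : ℕ => (n:ℝ)⁻¹) i :=
        Summable.sum_le_tsum _ (fun i _ => Set.indicator_nonneg (fun _ _ => by positivity) _) hind
    _ = ∑' m : N.smoothNumbers, ((m : ℕ) : ℝ)⁻¹ := (_root_.tsum_subtype N.smoothNumbers _).symm
    _ = _ := hhas'.tsum_eq

lemma prod_le_inv_log (N : ℕ) (hN : 2 ≤ N) :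
    ∏ p ∈ N.primesBelow, ((1:ℝ) - (p:ℝ)⁻¹) ≤ (Real.log N)⁻¹ := by
  have hlog : 0 < Real.log N := Real.log_pos (by exact_mod_cast hN)
  have h := euler_harmonic N hN
  have heq : ∏ p ∈ N.primesBelow, ((1:ℝ) - (p:ℝ)⁻¹)
      = (∏ p ∈ N.primesBelow, ((1:ℝ) - (p:ℝ)⁻¹)⁻¹)⁻¹ := by
    rw [← Finset.prod_inv_distrib]
    exact Finset.prod_congr rfl fun p _ => (inv_inv _).symm
  rw [heq]
  exact inv_anti₀ hlog h

lemma real_bound_s17 (M Pr Φ A R L LL : ℝ) (hPr3 : 3 ≤ Pr) (hMge : 2*Pr ≤ M)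
    (hΦ1 : 1 ≤ Φ) (hΦM : Φ ≤ M) (hA1 : 1 ≤ A) (hAM : A ≤ M) (hR0 : 0 ≤ R)
    (hRP : R ≤ Pr) (hRA : R ≤ A) (hlogP : 0 < L) (hlogPle : L ≤ Pr)
    (hratio : Φ/M ≤ L⁻¹) (hll0 : 0 < LL) (hll : LL ≤ 3*L) :
    |(Φ-1)/(M-Pr)*(R-A) + A*Φ/M| ≤ 100*Pr/LL := by
  have hPpos : (0:ℝ) < Pr := by linarith
  have hM0 : (0:ℝ) < M := by linarith
  have hMPr : (0:ℝ) < M - Pr := by linarith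
  have hkey : (Φ - 1)/(M - Pr) * (R - A) + A * Φ / M
      = (A*(M - Pr*Φ) + (Φ-1)*R*M) / (M*(M-Pr)) := by
    field_simp
    ring
  rw [hkey, abs_div, abs_of_pos (by positivity : (0:ℝ) < M*(M-Pr))]
  have hnum : |A*(M - Pr*Φ) + (Φ-1)*R*M| ≤ M*(M + 2*Pr*Φ) := by
    calc |A*(M - Pr*Φ) + (Φ-1)*R*M| ≤ |A*(M - Pr*Φ)| + |(Φ-1)*R*M| := abs_add_le _ _
    _ = A*|M - Pr*Φ| + (Φ-1)*R*M := by
        rw [abs_mul, abs_of_nonneg (by linarith : (0:ℝ) ≤ A),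
          abs_of_nonneg (mul_nonneg (mul_nonneg (by linarith) hR0) hM0.le)]
    _ ≤ M*(M + Pr*Φ) + Φ*Pr*M := by
        have h1 : |M - Pr*Φ| ≤ M + Pr*Φ := by
          rw [abs_sub_le_iff]
          constructor <;> nlinarith
        have h2 : A*|M - Pr*Φ| ≤ M*(M + Pr*Φ) :=
          mul_le_mul hAM h1 (abs_nonneg _) hM0.le
        have h3 : (Φ-1)*R ≤ Φ*Pr :=
          mul_le_mul (by linarith) hRP hR0 (by linarith)
        have h4 : (Φ-1)*R*M ≤ Φ*Pr*M := mul_le_mul_of_nonneg_right h3 hM0.le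
        linarith
    _ = M*(M + 2*Pr*Φ) := by ring
  calc |A*(M - Pr*Φ) + (Φ-1)*R*M| / (M*(M-Pr)) ≤ (M*(M + 2*Pr*Φ)) / (M*(M-Pr)) := by
        gcongr
  _ = (M + 2*Pr*Φ)/(M-Pr) := by rw [mul_div_mul_left _ _ (ne_of_gt hM0)]
  _ ≤ (M + 2*Pr*Φ)/(M/2) := by
      apply div_le_div_of_nonneg_left (by nlinarith) (by linarith) (by linarith)
  _ = 2 + 4*Pr*(Φ/M) := by field_simp; ring
  _ ≤ 2 + 4*Pr*L⁻¹ := by nlinarith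
  _ ≤ 100*Pr/(3*L) := by
      rw [le_div_iff₀ (by positivity)]
      have he : (2 + 4*Pr*L⁻¹)*(3*L) = 6*L + 12*Pr := by field_simp; ring
      rw [he]
      nlinarith
  _ ≤ 100*Pr/LL := by
      apply div_le_div_of_nonneg_left (by linarith) hll0 hll

theorem s_t_approx :
    ∃ C > (0 : ℝ), ∀ t : ℕ, 2 ≤ t →
      ∀ m : ℕ, m = ∏ i ∈ Finset.range t, Nat.nth Nat.Prime i →
        ∀ n : ℕ, 1 ≤ n → n < m →
          |((Nat.totient m : ℝ) - 1) / ((m : ℝ) - Nat.nth Nat.Prime (t - 1))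
              * (r (Nat.nth Nat.Prime (t - 1)) n - r m n)
            + (n : ℝ) * Nat.totient m / m| ≤
            C * (Nat.nth Nat.Prime (t - 1) : ℝ) / Real.log (Real.log m) := by
  refine ⟨100, by norm_num, ?_⟩
  intro t ht m hm n hn1 hn2
  obtain ⟨s, rfl⟩ : ∃ s, t = s + 1 := ⟨t - 1, by omega⟩
  have hs1 : 1 ≤ s := by omega
  simp only [Nat.add_sub_cancel] at *
  have hinf : {p | Nat.Prime p}.Infinite := Nat.infinite_setOf_prime
  set P := Nat.nth Nat.Prime s with hPdef
  have hsm : StrictMono (Nat.nth Nat.Prime) := fun a b hab => (Nat.nth_lt_nth hinf).mpr hab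
  have hprime : P.Prime := Nat.prime_nth_prime _
  have hP3 : 3 ≤ P := by
    have := hsm.monotone hs1
    rwa [Nat.nth_prime_one_eq_three] at this
  -- prime factors of m
  have himg : (Finset.range (s+1)).image (Nat.nth Nat.Prime) = (P+1).primesBelow := by
    ext q
    simp only [Finset.mem_image, Finset.mem_range, Nat.mem_primesBelow]
    constructor
    · rintro ⟨i, hi, rfl⟩
      exact ⟨Nat.lt_succ_of_le (hsm.monotone (by omega)), Nat.prime_nth_prime i⟩
    · rintro ⟨hq, hqp⟩
      refine ⟨Nat.count Nat.Prime q, ?_, Nat.nth_count hqp⟩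
      have hle : Nat.nth Nat.Prime (Nat.count Nat.Prime q) ≤ Nat.nth Nat.Prime s := by
        rw [Nat.nth_count hqp]; omega
      have := (Nat.nth_le_nth hinf).mp hle
      omega
  have hminj : m = ∏ q ∈ (P+1).primesBelow, q := by
    rw [← himg, Finset.prod_image (fun x _ y _ h => hsm.injective h)]
    exact hm
  have hfac : m.primeFactors = (P+1).primesBelow := by
    rw [hminj]
    exact Nat.primeFactors_prod (fun q hq => Nat.prime_of_mem_primesBelow hq)
  -- basic size facts
  have hm0 : 0 < m := by
    rw [hm]; exact Finset.prod_pos fun i _ => (Nat.prime_nth_prime i).pos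
  have hm2P : 2 * P ≤ m := by
    have h2 : 2 ≤ ∏ i ∈ Finset.range s, Nat.nth Nat.Prime i := by
      calc 2 = Nat.nth Nat.Prime 0 := Nat.nth_prime_zero_eq_two.symm
      _ ≤ _ := Finset.single_le_prod' (fun i _ => (Nat.prime_nth_prime i).one_lt.le)
          (Finset.mem_range.mpr (by omega))
    calc 2 * P ≤ (∏ i ∈ Finset.range s, Nat.nth Nat.Prime i) * P :=
          Nat.mul_le_mul_right P h2
    _ = m := by rw [hm, Finset.prod_range_succ]
  have hmPP : m ≤ P^(P+1) := by
    calc m ≤ ∏ _i ∈ Finset.range (s+1), P := by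
          rw [hm]
          exact Finset.prod_le_prod' fun i hi => hsm.monotone
            (by simp only [Finset.mem_range] at hi; omega)
    _ = P^(s+1) := by rw [Finset.prod_const, Finset.card_range]
    _ ≤ P^(P+1) := Nat.pow_le_pow_right hprime.pos
          (by have : s ≤ P := hsm.le_apply; omega)
  -- real facts
  have hPr3 : (3:ℝ) ≤ (P:ℝ) := by exact_mod_cast hP3
  have hPpos : (0:ℝ) < P := by linarith
  have hMge : (2:ℝ) * P ≤ (m:ℝ) := by exact_mod_cast hm2P
  have hM0 : (0:ℝ) < m := by exact_mod_cast hm0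
  have hA1 : (1:ℝ) ≤ n := by exact_mod_cast hn1
  have hAM : (n:ℝ) ≤ m := by exact_mod_cast hn2.le
  have hR0 : (0:ℝ) ≤ ((n % P : ℕ) : ℝ) := by positivity
  have hRP : ((n % P : ℕ) : ℝ) ≤ P := by exact_mod_cast (Nat.mod_lt n hprime.pos).le
  have hRA : ((n % P : ℕ) : ℝ) ≤ n := by exact_mod_cast Nat.mod_le n P
  have hΦ1 : (1:ℝ) ≤ (m.totient : ℝ) := by exact_mod_cast Nat.totient_pos.mpr hm0
  have hΦM : (m.totient : ℝ) ≤ m := by exact_mod_cast Nat.totient_le m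
  have hlogP : 0 < Real.log P := Real.log_pos (by linarith)
  have hlogPle : Real.log P ≤ (P:ℝ) := by
    have := Real.log_le_sub_one_of_pos hPpos; linarith
  -- totient ratio bound
  have hratio : (m.totient : ℝ) / m ≤ (Real.log P)⁻¹ := by
    have htot : (m.totient : ℝ) = m * ∏ p ∈ (P+1).primesBelow, (1 - (p:ℝ)⁻¹) := by
      have hq := Nat.totient_eq_mul_prod_factors m
      have hq2 := congrArg (fun x : ℚ => (x:ℝ)) hq
      push_cast at hq2
      rw [← hfac]
      exact hq2
    have hprodle : ∏ p ∈ (P+1).primesBelow, ((1:ℝ) - (p:ℝ)⁻¹) ≤ (Real.log ((P:ℝ)+1))⁻¹ := by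
      have := prod_le_inv_log (P+1) (by omega)
      rwa [Nat.cast_add, Nat.cast_one] at this
    have hloglog : (Real.log ((P:ℝ)+1))⁻¹ ≤ (Real.log P)⁻¹ := by
      apply inv_anti₀ hlogP
      apply Real.log_le_log hPpos
      linarith
    have hcanc : (m:ℝ) * (∏ p ∈ (P+1).primesBelow, ((1:ℝ) - (p:ℝ)⁻¹)) / m
        = ∏ p ∈ (P+1).primesBelow, ((1:ℝ) - (p:ℝ)⁻¹) := by
      field_simp
    rw [htot, hcanc]
    linarith
  -- log log m bounds
  have hlogM1 : 1 < Real.log m := by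
    rw [show (1:ℝ) = Real.log (Real.exp 1) by rw [Real.log_exp]]
    apply Real.log_lt_log (Real.exp_pos 1)
    have := Real.exp_one_lt_d9
    linarith
  have hll0 : 0 < Real.log (Real.log m) := Real.log_pos hlogM1
  have hll : Real.log (Real.log m) ≤ 3 * Real.log P := by
    have hlogM : Real.log m ≤ 2 * (P:ℝ)^2 := by
      have h1 : Real.log m ≤ Real.log ((P:ℝ)^(P+1)) := by
        apply Real.log_le_log hM0
        exact_mod_cast hmPP
      rw [Real.log_pow] at h1
      have h2 : ((P+1 : ℕ) : ℝ) * Real.log P ≤ 2 * (P:ℝ)^2 := by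
        push_cast
        nlinarith
      linarith
    have h2 : Real.log m ≤ (P:ℝ)^3 := by nlinarith
    calc Real.log (Real.log m) ≤ Real.log ((P:ℝ)^3) :=
          Real.log_le_log (by linarith) h2
    _ = 3 * Real.log P := by
        rw [show ((P:ℝ)^3) = (P:ℝ)^(3:ℕ) by norm_num, Real.log_pow]
        push_cast; ring
  -- rewrite r values and conclude
  have hr2 : r m n = (n : ℝ) := by simp [r, Nat.mod_eq_of_lt hn2]
  have hr1 : r P n = ((n % P : ℕ) : ℝ) := rfl
  rw [hr1, hr2]
  exact real_bound_s17 (m:ℝ) (P:ℝ) (m.totient : ℝ) (n:ℝ) ((n % P : ℕ) : ℝ)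
    (Real.log P) (Real.log (Real.log m)) hPr3 hMge hΦ1 hΦM hA1 hAM hR0 hRP hRA
    hlogP hlogPle hratio hll0 hll
end
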